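/- arXiv:2408.13599 — 6 statements merged into one kernel-verified Lean document; each statement's English description precedes it below -/
import Mathlib

section
/- Let N ≥ 2 and p ≥ 1. If v : (0, ∞) → ℝ is continuously differentiable with compact support in (0, ∞), then for every t > 0, |v(t)|^p ≤ p · (∫₀^∞ |v(s)|^p sinh^{N−1}(s) ds)^{(p−1)/p} · (∫₀^∞ |v'(s)|^p sinh^{N−1}(s) ds)^{1/p} · sinh^{1−N}(t). -/
open MeasureTheory

private lemma myaux_ftc {F D g : ℝ → ℝ} {t T : ℝ} (hT : t ≤ T) (hFT : F T = 0)
    (hD : ∀ s, HasDerivAt F (D s) s) (hDc : Continuous D) (hg : ∀ s, |D s| ≤ g s)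
    (hgc : Continuous g) (hgint : IntegrableOn g (Set.Ioi t)) (hg0 : ∀ s, 0 ≤ g s) :
    F t ≤ ∫ s in Set.Ioi t, g s := by
  have h1 : ∫ s in t..T, D s = F T - F t :=
    intervalIntegral.integral_eq_sub_of_hasDerivAt (fun s _ => hD s)
      (hDc.intervalIntegrable t T)
  have h2 : F t = -(∫ s in t..T, D s) := by rw [h1, hFT]; ring
  calc F t ≤ |∫ s in t..T, D s| := by rw [h2] at *; exact neg_le_abs _
    _ ≤ ∫ s in t..T, |D s| := intervalIntegral.abs_integral_le_integral_abs hT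
    _ ≤ ∫ s in t..T, g s :=
        intervalIntegral.integral_mono_on hT (hDc.abs.intervalIntegrable t T)
          (hgc.intervalIntegrable t T) (fun s _ => hg s)
    _ = ∫ s in Set.Ioc t T, g s := intervalIntegral.integral_of_le hT
    _ ≤ ∫ s in Set.Ioi t, g s := by
        apply setIntegral_mono_set hgint (ae_of_all _ hg0)
        exact HasSubset.Subset.eventuallyLE Set.Ioc_subset_Ioi_self

private lemma myaux_abs_mul (p : ℝ) (hp : 1 < p) (x : ℝ) :
    |x| * |x| ^ (p - 2) = |x| ^ (p - 1) := by
  rcases eq_or_ne x 0 with rfl | hx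
  · simp [Real.zero_rpow (by linarith : p - 1 ≠ 0)]
  · have h := Real.rpow_add (abs_pos.2 hx) 1 (p - 2)
    rw [Real.rpow_one] at h
    rw [← h]
    congr 1
    ring

private lemma myaux_cont (p : ℝ) (hp : 1 < p) :
    Continuous (fun x : ℝ => x * |x| ^ (p - 2)) := by
  rw [continuous_iff_continuousAt]
  intro x
  rcases eq_or_ne x 0 with rfl | hx
  · have h0 : (fun x : ℝ => x * |x| ^ (p - 2)) 0 = 0 := by simp
    rw [ContinuousAt, zero_mul]
    apply squeeze_zero_norm (a := fun x : ℝ => |x| ^ (p - 1))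
    · intro y
      rw [Real.norm_eq_abs, abs_mul,
        abs_of_nonneg (Real.rpow_nonneg (abs_nonneg y) _), myaux_abs_mul p hp]
    · have hc : Continuous fun y : ℝ => |y| ^ (p - 1) :=
        continuous_abs.rpow_const (fun y => Or.inr (by linarith))
      have := hc.tendsto 0
      simpa [Real.zero_rpow (show p - 1 ≠ 0 by linarith)] using this
  · exact continuousAt_id.mul
      ((Real.continuousAt_rpow_const _ _ (Or.inl (abs_ne_zero.2 hx))).comp
        continuous_abs.continuousAt)

private lemma myaux_deriv (p : ℝ) (hp : 1 < p) (x : ℝ) :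
    HasDerivAt (fun y : ℝ => |y| ^ p) (p * (x * |x| ^ (p - 2))) x := by
  rcases lt_trichotomy x 0 with hx | rfl | hx
  · have h1 : HasDerivAt (fun y : ℝ => (-y) ^ p) (p * (-x) ^ (p - 1) * (-1)) x := by
      have h := Real.hasDerivAt_rpow_const (x := -x) (p := p) (Or.inl (by linarith))
      exact h.comp x (hasDerivAt_neg x)
    have h2 : (fun y : ℝ => |y| ^ p) =ᶠ[nhds x] (fun y : ℝ => (-y) ^ p) := by
      filter_upwards [Iio_mem_nhds hx] with y hy
      rw [abs_of_neg hy]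
    have h3 := h1.congr_of_eventuallyEq h2
    refine h3.congr_deriv ?_
    have hxx : (-x) ^ (p - 1) = (-x) * (-x) ^ (p - 2) := by
      have h := Real.rpow_add (by linarith : (0:ℝ) < -x) 1 (p - 2)
      rw [Real.rpow_one] at h
      rw [← h]; congr 1; ring
    rw [abs_of_neg hx, hxx]; ring
  · have h0 : p * ((0:ℝ) * |(0:ℝ)| ^ (p - 2)) = 0 := by ring
    rw [h0, hasDerivAt_iff_tendsto_slope]
    have hsl : slope (fun y : ℝ => |y| ^ p) 0 = fun y : ℝ => |y| ^ p / y := by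
      funext y
      simp [slope_def_field, Real.zero_rpow (show p ≠ 0 by linarith), div_eq_mul_inv]
    rw [hsl]
    apply squeeze_zero_norm (a := fun y : ℝ => |y| ^ (p - 1))
    · intro y
      rcases eq_or_ne y 0 with rfl | hy
      · simp [Real.rpow_nonneg]
      · rw [Real.norm_eq_abs, abs_div, abs_of_nonneg (Real.rpow_nonneg (abs_nonneg y) _),
          Real.rpow_sub (abs_pos.2 hy), Real.rpow_one]
    · have hc : Continuous fun y : ℝ => |y| ^ (p - 1) :=
        continuous_abs.rpow_const (fun y => Or.inr (by linarith))
      have h5 : Filter.Tendsto (fun y : ℝ => |y| ^ (p - 1)) (nhdsWithin 0 {(0:ℝ)}ᶜ)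
          (nhds (|(0:ℝ)| ^ (p - 1))) := (hc.tendsto 0).mono_left nhdsWithin_le_nhds
      simpa [Real.zero_rpow (show p - 1 ≠ 0 by linarith)] using h5
  · have h1 : HasDerivAt (fun y : ℝ => y ^ p) (p * x ^ (p - 1)) x :=
      Real.hasDerivAt_rpow_const (Or.inl (by linarith))
    have h2 : (fun y : ℝ => |y| ^ p) =ᶠ[nhds x] (fun y : ℝ => y ^ p) := by
      filter_upwards [Ioi_mem_nhds hx] with y hy
      rw [abs_of_pos hy]
    have h3 := h1.congr_of_eventuallyEq h2
    refine h3.congr_deriv ?_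
    have hxx : x ^ (p - 1) = x * x ^ (p - 2) := by
      have h := Real.rpow_add hx 1 (p - 2)
      rw [Real.rpow_one] at h
      rw [← h]; congr 1; ring
    rw [abs_of_pos hx, hxx]

private lemma myaux_rpow_inv {p a : ℝ} (hp : 1 < p) (ha : 0 ≤ a) (c : ℝ) (hc : c ≠ 0) :
    (a ^ c) ^ c⁻¹ = a := by
  rw [← Real.rpow_mul ha, mul_inv_cancel₀ hc, Real.rpow_one]

private lemma myaux_split (p : ℝ) (hp : 1 < p) {x z y : ℝ} (hx : 0 ≤ x) (hz : 0 ≤ z)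
    (hy : 0 ≤ y) :
    (x ^ p * y) ^ ((p - 1) / p) * (z ^ p * y) ^ (1 / p) = x ^ (p - 1) * z * y := by
  have hp0 : (0:ℝ) < p := by linarith
  rw [Real.mul_rpow (Real.rpow_nonneg hx p) hy, Real.mul_rpow (Real.rpow_nonneg hz p) hy,
    ← Real.rpow_mul hx, ← Real.rpow_mul hz,
    show p * ((p - 1) / p) = p - 1 by field_simp,
    show p * (1 / p) = 1 by field_simp, Real.rpow_one]
  rcases eq_or_lt_of_le hy with rfl | hy'
  · rw [Real.zero_rpow (div_ne_zero (by linarith) (by linarith)), Real.zero_rpow (one_div_ne_zero (by linarith))]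
    ring
  · rw [mul_mul_mul_comm, ← Real.rpow_add hy', show (p - 1) / p + 1 / p = 1 by field_simp; ring,
      Real.rpow_one]

theorem stmt5 (N : ℕ) (hN : 2 ≤ N) (p : ℝ) (hp : 1 ≤ p)
    (v : ℝ → ℝ) (hv : ContDiff ℝ 1 v) (hcs : HasCompactSupport v)
    (hsupp : Function.support v ⊆ Set.Ioi 0) (t : ℝ) (ht : 0 < t) :
    |v t| ^ p ≤
      p * (∫ s in Set.Ioi (0:ℝ), |v s| ^ p * Real.sinh s ^ (N - 1)) ^ ((p - 1) / p)
        * (∫ s in Set.Ioi (0:ℝ), |deriv v s| ^ p * Real.sinh s ^ (N - 1)) ^ (1 / p)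
        * Real.sinh t ^ ((1 : ℝ) - N) := by
  have hN1 : 1 ≤ N := le_trans (by norm_num) hN
  have hvc : Continuous v := hv.continuous
  have hv'c : Continuous (deriv v) := hv.continuous_deriv le_rfl
  have hdv : Differentiable ℝ v := hv.differentiable one_ne_zero
  have hcs' : HasCompactSupport (deriv v) := hcs.deriv
  have hp0 : (0:ℝ) < p := by linarith
  set w : ℝ → ℝ := fun s => Real.sinh s ^ (N - 1) with hw
  have hwc : Continuous w := Real.continuous_sinh.pow _
  have hsinht : (0:ℝ) < Real.sinh t := Real.sinh_pos_iff.2 ht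
  have hS : (0:ℝ) < w t := pow_pos hsinht _
  have hsuppd : ∀ s, deriv v s ≠ 0 → (0:ℝ) ≤ s := by
    intro s h
    have h1 : s ∈ tsupport v := support_deriv_subset (Function.mem_support.2 h)
    have h2 : tsupport v ⊆ Set.Ici 0 :=
      closure_minimal (hsupp.trans Set.Ioi_subset_Ici_self) isClosed_Ici
    exact h2 h1
  have hA0 : ∀ s, 0 ≤ |v s| ^ p * w s := by
    intro s
    rcases eq_or_ne (v s) 0 with h | h
    · simp [h, Real.zero_rpow (ne_of_gt hp0)]
    · have hs : (0:ℝ) < s := hsupp (Function.mem_support.2 h)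
      exact mul_nonneg (Real.rpow_nonneg (abs_nonneg _) _)
        (pow_nonneg (Real.sinh_nonneg_iff.2 hs.le) _)
  have hB0 : ∀ s, 0 ≤ |deriv v s| ^ p * w s := by
    intro s
    rcases eq_or_ne (deriv v s) 0 with h | h
    · simp [h, Real.zero_rpow (ne_of_gt hp0)]
    · exact mul_nonneg (Real.rpow_nonneg (abs_nonneg _) _)
        (pow_nonneg (Real.sinh_nonneg_iff.2 (hsuppd s h)) _)
  -- the two main integrals
  set A := ∫ s in Set.Ioi (0:ℝ), |v s| ^ p * w s with hA
  set B := ∫ s in Set.Ioi (0:ℝ), |deriv v s| ^ p * w s with hB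
  have hAc : Continuous (fun s => |v s| ^ p * w s) :=
    (hvc.abs.rpow_const fun s => Or.inr hp0.le).mul hwc
  have hBc : Continuous (fun s => |deriv v s| ^ p * w s) :=
    (hv'c.abs.rpow_const fun s => Or.inr hp0.le).mul hwc
  have hAcs : HasCompactSupport (fun s => |v s| ^ p * w s) := by
    have h1 : HasCompactSupport (fun s => |v s| ^ p) :=
      hcs.comp_left (g := fun x : ℝ => |x| ^ p) (by simp [Real.zero_rpow (ne_of_gt hp0)])
    exact h1.mul_right
  have hBcs : HasCompactSupport (fun s => |deriv v s| ^ p * w s) := by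
    have h1 : HasCompactSupport (fun s => |deriv v s| ^ p) :=
      hcs'.comp_left (g := fun x : ℝ => |x| ^ p) (by simp [Real.zero_rpow (ne_of_gt hp0)])
    exact h1.mul_right
  have hAint : Integrable (fun s => |v s| ^ p * w s) :=
    hAc.integrable_of_hasCompactSupport hAcs
  have hBint : Integrable (fun s => |deriv v s| ^ p * w s) :=
    hBc.integrable_of_hasCompactSupport hBcs
  have hAmono : (∫ s in Set.Ioi t, |v s| ^ p * w s) ≤ A :=
    setIntegral_mono_set hAint.integrableOn (ae_of_all _ hA0)
      (HasSubset.Subset.eventuallyLE (Set.Ioi_subset_Ioi ht.le))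
  have hBmono : (∫ s in Set.Ioi t, |deriv v s| ^ p * w s) ≤ B :=
    setIntegral_mono_set hBint.integrableOn (ae_of_all _ hB0)
      (HasSubset.Subset.eventuallyLE (Set.Ioi_subset_Ioi ht.le))
  have hAt0 : 0 ≤ ∫ s in Set.Ioi t, |v s| ^ p * w s :=
    setIntegral_nonneg measurableSet_Ioi (fun s _ => hA0 s)
  have hBt0 : 0 ≤ ∫ s in Set.Ioi t, |deriv v s| ^ p * w s :=
    setIntegral_nonneg measurableSet_Ioi (fun s _ => hB0 s)
  -- final rewrite of sinh t ^ (1 - N)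
  have hpow : Real.sinh t ^ ((1:ℝ) - N) = (w t)⁻¹ := by
    rw [show ((1:ℝ) - N) = -((N - 1 : ℕ) : ℝ) by rw [Nat.cast_sub hN1]; push_cast; ring,
      Real.rpow_neg hsinht.le, Real.rpow_natCast]
  -- get a zero of v to the right of t
  obtain ⟨R, hR0, hR⟩ := hcs.exists_pos_le_norm
  set T : ℝ := max t R with hTdef
  have htT : t ≤ T := le_max_left _ _
  have hvT : v T = 0 := by
    apply hR
    rw [Real.norm_eq_abs, abs_of_pos (lt_of_lt_of_le ht htT)]
    exact le_max_right _ _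
  rcases eq_or_lt_of_le hp with heq | hp'
  · -- case p = 1
    subst heq
    have hk1c : Continuous (fun s => |deriv v s|) := hv'c.abs
    have hk1cs : HasCompactSupport (fun s => |deriv v s|) :=
      hcs'.comp_left (g := abs) abs_zero
    have hk1int : IntegrableOn (fun s => |deriv v s|) (Set.Ioi t) :=
      (hk1c.integrable_of_hasCompactSupport hk1cs).integrableOn
    have h1 : v t ≤ ∫ s in Set.Ioi t, |deriv v s| :=
      myaux_ftc htT hvT (fun s => (hdv s).hasDerivAt) hv'c (fun s => le_refl _)
        hk1c hk1int (fun s => abs_nonneg _)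
    have h2 : -v t ≤ ∫ s in Set.Ioi t, |deriv v s| := by
      apply myaux_ftc (F := fun s => -v s) (D := fun s => -deriv v s) htT
        (by simp [hvT]) (fun s => ((hdv s).hasDerivAt).neg) hv'c.neg
        (fun s => by rw [abs_neg]) hk1c hk1int (fun s => abs_nonneg _)
    have hkey : |v t| ≤ ∫ s in Set.Ioi t, |deriv v s| := abs_le.2 ⟨by linarith, h1⟩
    have hstep2 : w t * (∫ s in Set.Ioi t, |deriv v s|) ≤
        ∫ s in Set.Ioi t, |deriv v s| * w s := by
      rw [← integral_const_mul]
      apply setIntegral_mono_on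
        ((hk1c.integrable_of_hasCompactSupport hk1cs).const_mul (w t)).integrableOn
        ((hk1c.mul hwc).integrable_of_hasCompactSupport hk1cs.mul_right).integrableOn
        measurableSet_Ioi
      intro s hs
      have h3 : w t ≤ w s :=
        pow_le_pow_left₀ (Real.sinh_nonneg_iff.2 ht.le) (Real.sinh_le_sinh.2 (le_of_lt hs)) _
      calc w t * |deriv v s| ≤ w s * |deriv v s| :=
            mul_le_mul_of_nonneg_right h3 (abs_nonneg _)
        _ = |deriv v s| * w s := mul_comm _ _
    have hstep3 : (∫ s in Set.Ioi t, |deriv v s| * w s) ≤ B := by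
      have : ∀ s, |deriv v s| * w s = |deriv v s| ^ (1:ℝ) * w s := by
        intro s; rw [Real.rpow_one]
      simp_rw [this]
      exact hBmono
    have hfinal : |v t| * w t ≤ B := by
      calc |v t| * w t ≤ (∫ s in Set.Ioi t, |deriv v s|) * w t :=
            mul_le_mul_of_nonneg_right hkey hS.le
        _ = w t * ∫ s in Set.Ioi t, |deriv v s| := mul_comm _ _
        _ ≤ ∫ s in Set.Ioi t, |deriv v s| * w s := hstep2
        _ ≤ B := hstep3
    rw [hpow]
    rw [show ((1:ℝ) - 1) / 1 = 0 by norm_num, Real.rpow_zero, Real.rpow_one,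
      show (1:ℝ)/1 = 1 by norm_num, Real.rpow_one, one_mul,
      ← div_eq_mul_inv, le_div_iff₀ hS, one_mul]
    exact hfinal
  · -- case 1 < p
    set k : ℝ → ℝ := fun s => |v s| ^ (p - 1) * |deriv v s| with hk
    have hkc : Continuous k :=
      (hvc.abs.rpow_const fun s => Or.inr (by linarith)).mul hv'c.abs
    have hkcs : HasCompactSupport k :=
      HasCompactSupport.mul_left (hcs'.comp_left (g := abs) abs_zero)
    have hkint : Integrable k := hkc.integrable_of_hasCompactSupport hkcs
    have hk0 : ∀ s, 0 ≤ k s :=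
      fun s => mul_nonneg (Real.rpow_nonneg (abs_nonneg _) _) (abs_nonneg _)
    -- FTC step
    have hchain : ∀ s, HasDerivAt (fun u => |v u| ^ p)
        (p * (v s * |v s| ^ (p - 2)) * deriv v s) s := by
      intro s
      exact (myaux_deriv p hp' (v s)).comp s ((hdv s).hasDerivAt)
    have hDc : Continuous (fun s => p * (v s * |v s| ^ (p - 2)) * deriv v s) :=
      (continuous_const.mul ((myaux_cont p hp').comp hvc)).mul hv'c
    have hFT : |v T| ^ p = 0 := by
      rw [hvT, abs_zero, Real.zero_rpow (ne_of_gt hp0)]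
    have hkey : |v t| ^ p ≤ ∫ s in Set.Ioi t, p * k s := by
      apply myaux_ftc (g := fun s => p * k s) htT hFT hchain hDc _ (continuous_const.mul hkc)
        (hkint.const_mul p).integrableOn (fun s => mul_nonneg hp0.le (hk0 s))
      intro s
      have h1 : |p * (v s * |v s| ^ (p - 2)) * deriv v s| =
          p * (|v s| * |v s| ^ (p - 2)) * |deriv v s| := by
        rw [abs_mul, abs_mul, abs_mul, abs_of_pos hp0,
          abs_of_nonneg (Real.rpow_nonneg (abs_nonneg _) _)]
      rw [h1, myaux_abs_mul p hp', hk, mul_assoc]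
    -- weight insertion step
    have hstep2 : w t * (∫ s in Set.Ioi t, k s) ≤ ∫ s in Set.Ioi t, k s * w s := by
      rw [← integral_const_mul]
      apply setIntegral_mono_on (hkint.const_mul (w t)).integrableOn
        ((hkc.mul hwc).integrable_of_hasCompactSupport hkcs.mul_right).integrableOn
        measurableSet_Ioi
      intro s hs
      have h3 : w t ≤ w s :=
        pow_le_pow_left₀ (Real.sinh_nonneg_iff.2 ht.le) (Real.sinh_le_sinh.2 (le_of_lt hs)) _
      calc w t * k s ≤ w s * k s := mul_le_mul_of_nonneg_right h3 (hk0 s)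
        _ = k s * w s := mul_comm _ _
    -- Hölder step
    set q : ℝ := p / (p - 1) with hq
    have hpq : q.HolderConjugate p :=
      ((Real.holderConjugate_iff_eq_conjExponent hp').2 hq).symm
    set F : ℝ → ℝ := fun s => (|v s| ^ p * w s) ^ ((p - 1) / p) with hF
    set G : ℝ → ℝ := fun s => (|deriv v s| ^ p * w s) ^ (1 / p) with hG
    have hFc : Continuous F :=
      hAc.rpow_const fun s => Or.inr (div_nonneg (by linarith) hp0.le)
    have hGc : Continuous G :=
      hBc.rpow_const fun s => Or.inr (div_nonneg zero_le_one hp0.le)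
    have hFcs : HasCompactSupport F :=
      hAcs.comp_left (g := fun x : ℝ => x ^ ((p - 1) / p))
        (Real.zero_rpow (div_ne_zero (by linarith) (ne_of_gt hp0)))
    have hGcs : HasCompactSupport G :=
      hBcs.comp_left (g := fun x : ℝ => x ^ ((1:ℝ) / p))
        (Real.zero_rpow (one_div_ne_zero (ne_of_gt hp0)))
    have hmemF : MemLp F (ENNReal.ofReal q) (volume.restrict (Set.Ioi t)) :=
      (hFc.memLp_of_hasCompactSupport hFcs).restrict _
    have hmemG : MemLp G (ENNReal.ofReal p) (volume.restrict (Set.Ioi t)) :=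
      (hGc.memLp_of_hasCompactSupport hGcs).restrict _
    have hHold := integral_mul_le_Lp_mul_Lq_of_nonneg hpq
      (ae_of_all _ fun s => Real.rpow_nonneg (hA0 s) _)
      (ae_of_all _ fun s => Real.rpow_nonneg (hB0 s) _) hmemF hmemG
    have hws : ∀ s ∈ Set.Ioi t, 0 ≤ w s := by
      intro s hs
      exact pow_nonneg (Real.sinh_nonneg_iff.2 (le_of_lt (lt_trans ht hs))) _
    have e1 : (∫ s in Set.Ioi t, F s * G s) = ∫ s in Set.Ioi t, k s * w s := by
      apply setIntegral_congr_fun measurableSet_Ioi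
      intro s hs
      simp only [hF, hG, hk]
      rw [myaux_split p hp' (abs_nonneg _) (abs_nonneg _) (hws s hs)]
    have e2 : (∫ s in Set.Ioi t, F s ^ q) = ∫ s in Set.Ioi t, |v s| ^ p * w s := by
      apply setIntegral_congr_fun measurableSet_Ioi
      intro s hs
      simp only [hF]
      rw [show q = (((p-1)/p))⁻¹ by rw [hq, inv_div]]
      exact myaux_rpow_inv hp' (hA0 s) _ (div_ne_zero (by linarith) (ne_of_gt hp0))
    have e3 : (∫ s in Set.Ioi t, G s ^ p) = ∫ s in Set.Ioi t, |deriv v s| ^ p * w s := by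
      apply setIntegral_congr_fun measurableSet_Ioi
      intro s hs
      simp only [hG]
      rw [one_div]
      have h7 := myaux_rpow_inv hp' (hB0 s) p⁻¹ (inv_ne_zero (ne_of_gt hp0))
      rwa [inv_inv] at h7
    rw [e1, e2, e3, show (1:ℝ)/q = (p-1)/p by rw [hq, one_div_div]] at hHold
    have hstep4 : (∫ s in Set.Ioi t, |v s| ^ p * w s) ^ ((p-1)/p)
        * (∫ s in Set.Ioi t, |deriv v s| ^ p * w s) ^ (1/p)
        ≤ A ^ ((p-1)/p) * B ^ (1/p) := by
      apply mul_le_mul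
      · exact Real.rpow_le_rpow hAt0 hAmono (div_nonneg (by linarith) hp0.le)
      · exact Real.rpow_le_rpow hBt0 hBmono (div_nonneg zero_le_one hp0.le)
      · exact Real.rpow_nonneg hBt0 _
      · exact Real.rpow_nonneg (le_trans hAt0 hAmono) _
    -- assemble
    have hfinal : |v t| ^ p * w t ≤ p * A ^ ((p-1)/p) * B ^ (1/p) := by
      have h5 : |v t| ^ p ≤ p * ∫ s in Set.Ioi t, k s := by
        rwa [integral_const_mul] at hkey
      have h6 : |v t| ^ p * w t ≤ p * (w t * ∫ s in Set.Ioi t, k s) := by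
        have := mul_le_mul_of_nonneg_right h5 hS.le
        calc |v t| ^ p * w t ≤ p * (∫ s in Set.Ioi t, k s) * w t := this
          _ = p * (w t * ∫ s in Set.Ioi t, k s) := by ring
      calc |v t| ^ p * w t ≤ p * (w t * ∫ s in Set.Ioi t, k s) := h6
        _ ≤ p * ∫ s in Set.Ioi t, k s * w s := mul_le_mul_of_nonneg_left hstep2 hp0.le
        _ ≤ p * (A ^ ((p-1)/p) * B ^ (1/p)) :=
            mul_le_mul_of_nonneg_left (le_trans hHold hstep4) hp0.le
        _ = p * A ^ ((p-1)/p) * B ^ (1/p) := by ring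
    rw [hpow, ← div_eq_mul_inv, le_div_iff₀ hS]
    exact hfinal
end

section
/- Let N ≥ 1, p ≥ 1, R > 0. There exists C > 0 depending only on N, p, R, such that every continuously differentiable v : (0, R] → ℝ satisfies |v(R)|^p ≤ C·( ∫₀^R |v(t)|^p sinh^{N−1}(t) dt + ∫₀^R |v'(t)|^p sinh^{N−1}(t) dt ), provided both integrals are finite. -/
open MeasureTheory Set

theorem stmt10 (N : ℕ) (hN : 1 ≤ N) (p R : ℝ) (hp : 1 ≤ p) (hR : 0 < R) :
    ∃ C : ℝ, 0 < C ∧ ∀ v v' : ℝ → ℝ,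
      (∀ t ∈ Set.Ioc (0:ℝ) R, HasDerivWithinAt v (v' t) (Set.Ioc 0 R) t) →
      ContinuousOn v' (Set.Ioc 0 R) →
      IntegrableOn (fun t => |v t| ^ p * Real.sinh t ^ (N - 1)) (Set.Ioo 0 R) →
      IntegrableOn (fun t => |v' t| ^ p * Real.sinh t ^ (N - 1)) (Set.Ioo 0 R) →
      |v R| ^ p ≤ C * ((∫ t in Set.Ioo (0:ℝ) R, |v t| ^ p * Real.sinh t ^ (N - 1))
        + ∫ t in Set.Ioo (0:ℝ) R, |v' t| ^ p * Real.sinh t ^ (N - 1)) := by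
  have hp0 : (0:ℝ) < p := lt_of_lt_of_le one_pos hp
  have hR2 : (0:ℝ) < R/2 := by linarith
  set m : ℝ := Real.sinh (R/2) ^ (N-1) with hm
  have hm0 : 0 < m := pow_pos (Real.sinh_pos_iff.2 hR2) _
  set C₀ : ℝ := (2:ℝ)^p * (2/R + (R/2+1)^p) with hC0
  have hC00 : 0 < C₀ := by positivity
  refine ⟨C₀ / m, by positivity, ?_⟩
  intro v v' hderiv hv' hint1 hint2
  have hS : Icc (R/2) R ⊆ Ioc 0 R := fun x hx => ⟨by linarith [hx.1], hx.2⟩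
  have hSsub : Ioo (R/2) R ⊆ Ioo 0 R := fun x hx => ⟨by linarith [hx.1], hx.2⟩
  have hvC : ContinuousOn v (Ioc 0 R) := fun t ht => (hderiv t ht).continuousWithinAt
  have hvC2 : ContinuousOn v (Icc (R/2) R) := hvC.mono hS
  have hv'C2 : ContinuousOn v' (Icc (R/2) R) := hv'.mono hS
  have habs : Continuous fun x : ℝ => |x| ^ p :=
    continuous_abs.rpow_const (fun x => Or.inr hp0.le)
  have hA_int : IntegrableOn (fun t => |v t| ^ p) (Ioo (R/2) R) :=
    ((habs.comp_continuousOn hvC2).integrableOn_Icc).mono_set Ioo_subset_Icc_self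
  have hB_int : IntegrableOn (fun t => |v' t| ^ p) (Ioo (R/2) R) :=
    ((habs.comp_continuousOn hv'C2).integrableOn_Icc).mono_set Ioo_subset_Icc_self
  have hD_int : IntegrableOn (fun t => |v' t|) (Ioo (R/2) R) :=
    ((continuous_abs.comp_continuousOn hv'C2).integrableOn_Icc).mono_set Ioo_subset_Icc_self
  set A : ℝ := ∫ t in Ioo (R/2) R, |v t| ^ p with hA
  set B : ℝ := ∫ t in Ioo (R/2) R, |v' t| ^ p with hB
  set D : ℝ := ∫ t in Ioo (R/2) R, |v' t| with hD
  have hA0 : 0 ≤ A := setIntegral_nonneg measurableSet_Ioo (fun t _ => by positivity)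
  have hB0 : 0 ≤ B := setIntegral_nonneg measurableSet_Ioo (fun t _ => by positivity)
  have hD0 : 0 ≤ D := setIntegral_nonneg measurableSet_Ioo (fun t _ => abs_nonneg _)
  -- FTC bound
  have key : ∀ t ∈ Ioo (R/2) R, |v R| ≤ |v t| + D := by
    intro t ht
    have ht0 : (0:ℝ) < t := lt_trans hR2 ht.1
    have htR : t ≤ R := ht.2.le
    have h1 : ∫ x in t..R, v' x = v R - v t := by
      apply intervalIntegral.integral_eq_sub_of_hasDeriv_right_of_le htR
      · exact hvC.mono (fun x hx => ⟨lt_of_lt_of_le ht0 hx.1, hx.2⟩)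
      · intro x hx
        have hx' : x ∈ Ioc (0:ℝ) R := ⟨lt_trans ht0 hx.1, hx.2.le⟩
        have hnhds : Ioc (0:ℝ) R ∈ nhds x := Ioc_mem_nhds hx'.1 hx.2
        exact ((hderiv x hx').hasDerivAt hnhds).hasDerivWithinAt
      · apply ContinuousOn.intervalIntegrable
        rw [uIcc_of_le htR]
        exact hv'.mono (fun x hx => ⟨lt_of_lt_of_le ht0 hx.1, hx.2⟩)
    have h2 : |v R - v t| ≤ D := by
      rw [← h1]
      calc |∫ x in t..R, v' x| ≤ ∫ x in t..R, |v' x| :=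
            intervalIntegral.abs_integral_le_integral_abs htR
        _ = ∫ x in Ioc t R, |v' x| := intervalIntegral.integral_of_le htR
        _ ≤ D := by
            apply setIntegral_mono_set hD_int
            · exact Filter.Eventually.of_forall (fun x => abs_nonneg _)
            · apply MeasureTheory.ae_le_set.2
              refine measure_mono_null ?_ (measure_singleton R)
              intro x hx
              simp only [mem_diff, mem_Ioc, mem_Ioo, not_and, not_lt] at hx
              have := hx.2 (lt_trans ht.1 hx.1.1)
              simp [le_antisymm hx.1.2 this]
    have := abs_sub_abs_le_abs_sub (v R) (v t)
    linarith
  -- average over t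
  have step5 : |v R| ^ p ≤ (2/R) * 2^p * A + 2^p * D^p := by
    have hmax : ∀ t ∈ Ioo (R/2) R, |v R| ^ p ≤ 2^p * (|v t|^p + D^p) := by
      intro t ht
      have h := key t ht
      have h2 : |v R| ≤ 2 * max (|v t|) D := by
        rcases le_total (|v t|) D with h' | h'
        · rw [max_eq_right h']; linarith
        · rw [max_eq_left h']; linarith
      have hmax0 : 0 ≤ max (|v t|) D := le_max_of_le_left (abs_nonneg _)
      calc |v R| ^ p ≤ (2 * max (|v t|) D) ^ p :=
            Real.rpow_le_rpow (abs_nonneg _) h2 hp0.le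
        _ = 2^p * (max (|v t|) D)^p := Real.mul_rpow (by norm_num) hmax0
        _ ≤ 2^p * (|v t|^p + D^p) := by
            have h2p : (0:ℝ) ≤ 2^p := Real.rpow_nonneg (by norm_num) p
            have : (max (|v t|) D)^p ≤ |v t|^p + D^p := by
              rcases max_cases (|v t|) D with ⟨he, _⟩ | ⟨he, _⟩ <;> rw [he]
              · have : (0:ℝ) ≤ D^p := Real.rpow_nonneg hD0 p
                linarith
              · have : (0:ℝ) ≤ |v t|^p := Real.rpow_nonneg (abs_nonneg _) p
                linarith
            exact mul_le_mul_of_nonneg_left this h2p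
    have hμ : (volume (Ioo (R/2) R)).toReal = R/2 := by
      rw [Real.volume_Ioo, ENNReal.toReal_ofReal (by linarith)]; ring
    have hconst_int : IntegrableOn (fun _ : ℝ => |v R| ^ p) (Ioo (R/2) R) :=
      integrableOn_const measure_Ioo_lt_top.ne
    have hrhs_int : IntegrableOn (fun t => 2^p * (|v t|^p + D^p)) (Ioo (R/2) R) :=
      (hA_int.add (integrableOn_const measure_Ioo_lt_top.ne)).const_mul _
    have hmono := setIntegral_mono_on hconst_int hrhs_int measurableSet_Ioo hmax
    rw [setIntegral_const, measureReal_def, hμ, smul_eq_mul] at hmono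
    have hrhs : ∫ t in Ioo (R/2) R, 2^p * (|v t|^p + D^p)
        = 2^p * (A + (R/2) * D^p) := by
      rw [MeasureTheory.integral_const_mul, integral_add hA_int
        (integrableOn_const measure_Ioo_lt_top.ne),
        setIntegral_const, measureReal_def, hμ, smul_eq_mul]
    rw [hrhs] at hmono
    have h2R : (0:ℝ) < 2/R := by positivity
    have h3 := mul_le_mul_of_nonneg_left hmono h2R.le
    have e1 : (2/R) * (R/2 * |v R|^p) = |v R|^p := by field_simp
    have e2 : (2/R) * (2^p * (A + R/2 * D^p)) = (2/R)*2^p*A + 2^p*D^p := by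
      field_simp
    rw [e1, e2] at h3
    exact h3
  -- epsilon/scaling bound on D
  have main : |v R| ^ p ≤ C₀ * (A + B) := by
    have hεmain : ∀ ε > (0:ℝ), |v R| ^ p ≤ C₀ * (A + B) + C₀ * ε := by
      intro ε hε
      set K : ℝ := A + B + ε with hK
      have hK0 : 0 < K := by rw [hK]; linarith
      set l : ℝ := K ^ (1/p) with hl
      have hl0 : 0 < l := Real.rpow_pos_of_pos hK0 _
      have hlp : l ^ p = K := by
        rw [hl, ← Real.rpow_mul hK0.le, one_div_mul_cancel hp0.ne', Real.rpow_one]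
      have hlp1 : 0 < l ^ (p-1) := Real.rpow_pos_of_pos hl0 _
      have hpt : ∀ t ∈ Ioo (R/2) R, |v' t| ≤ l + |v' t|^p * (l^(p-1))⁻¹ := by
        intro t ht
        rcases le_total (|v' t|) l with h | h
        · have h0 : (0:ℝ) ≤ |v' t|^p * (l^(p-1))⁻¹ := by positivity
          linarith
        · have hx0 : 0 < |v' t| := lt_of_lt_of_le hl0 h
          have e : |v' t| * |v' t|^(p-1) = |v' t|^p := by
            rw [Real.rpow_sub hx0, Real.rpow_one]; field_simp
          have h1 : |v' t| * l^(p-1) ≤ |v' t|^p := by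
            calc |v' t| * l^(p-1) ≤ |v' t| * |v' t|^(p-1) :=
                  mul_le_mul_of_nonneg_left (Real.rpow_le_rpow hl0.le h (by linarith)) hx0.le
              _ = |v' t|^p := e
          have h2 := (le_div_iff₀ hlp1).2 h1
          rw [div_eq_mul_inv] at h2
          linarith
      have hrhs2 : IntegrableOn (fun t => l + |v' t|^p * (l^(p-1))⁻¹) (Ioo (R/2) R) :=
        (integrableOn_const measure_Ioo_lt_top.ne).add (hB_int.mul_const _)
      have hDle := setIntegral_mono_on hD_int hrhs2 measurableSet_Ioo hpt
      have hμ : (volume (Ioo (R/2) R)).toReal = R/2 := by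
        rw [Real.volume_Ioo, ENNReal.toReal_ofReal (by linarith)]; ring
      rw [integral_add (μ := volume.restrict (Ioo (R/2) R)) (integrableOn_const measure_Ioo_lt_top.ne : IntegrableOn (fun _ => l) (Ioo (R/2) R) volume) (hB_int.mul_const (l^(p-1))⁻¹),
        setIntegral_const, measureReal_def, hμ, smul_eq_mul, MeasureTheory.integral_mul_const] at hDle
      have hBK : B * (l^(p-1))⁻¹ ≤ l := by
        have hBlp : B ≤ l^p := by rw [hlp, hK]; linarith
        have hmul : l^(p-1) * l = l^p := by
          rw [Real.rpow_sub hl0, Real.rpow_one]; field_simp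
        calc B * (l^(p-1))⁻¹ ≤ l^p * (l^(p-1))⁻¹ :=
              mul_le_mul_of_nonneg_right hBlp (inv_nonneg.2 hlp1.le)
          _ = l := by rw [← hmul]; field_simp
      have hDle2 : D ≤ (R/2+1) * l := by rw [add_mul, one_mul]; linarith
      have hDp : D^p ≤ (R/2+1)^p * K := by
        calc D^p ≤ ((R/2+1)*l)^p := Real.rpow_le_rpow hD0 hDle2 hp0.le
          _ = (R/2+1)^p * l^p := Real.mul_rpow (by linarith) hl0.le
          _ = (R/2+1)^p * K := by rw [hlp]
      have hAK : A ≤ K := by rw [hK]; linarith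
      have h2p : (0:ℝ) ≤ 2^p := Real.rpow_nonneg (by norm_num) p
      have h2R : (0:ℝ) ≤ 2/R := by positivity
      calc |v R|^p ≤ (2/R)*2^p*A + 2^p*D^p := step5
        _ ≤ (2/R)*2^p*K + 2^p*((R/2+1)^p*K) := by
            exact add_le_add (mul_le_mul_of_nonneg_left hAK (by positivity))
              (mul_le_mul_of_nonneg_left hDp h2p)
        _ = C₀ * (A+B) + C₀ * ε := by rw [hC0, hK]; ring
    refine le_of_forall_pos_le_add fun ε hε => ?_
    have h := hεmain (ε / C₀) (by positivity)
    calc |v R|^p ≤ C₀*(A+B) + C₀*(ε/C₀) := h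
      _ = C₀*(A+B) + ε := by rw [mul_div_cancel₀ _ hC00.ne']
  -- weight comparison
  have h7 : m * (A + B) ≤ (∫ t in Ioo (0:ℝ) R, |v t| ^ p * Real.sinh t ^ (N - 1))
      + ∫ t in Ioo (0:ℝ) R, |v' t| ^ p * Real.sinh t ^ (N - 1) := by
    have hwle : ∀ t ∈ Ioo (R/2) R, ∀ x : ℝ, m * |x|^p ≤ |x|^p * Real.sinh t ^ (N-1) := by
      intro t ht x
      rw [mul_comm]
      apply mul_le_mul_of_nonneg_left _ (Real.rpow_nonneg (abs_nonneg _) p)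
      exact pow_le_pow_left₀ (Real.sinh_nonneg_iff.2 hR2.le)
        (Real.sinh_le_sinh.2 ht.1.le) _
    have hcomp : ∀ (f : ℝ → ℝ), ContinuousOn f (Icc (R/2) R) →
        IntegrableOn (fun t => |f t|^p * Real.sinh t ^ (N-1)) (Ioo 0 R) →
        IntegrableOn (fun t => |f t|^p) (Ioo (R/2) R) →
        m * (∫ t in Ioo (R/2) R, |f t|^p)
          ≤ ∫ t in Ioo (0:ℝ) R, |f t|^p * Real.sinh t ^ (N-1) := by
      intro f hfc hfint hfint2
      have h1 : m * (∫ t in Ioo (R/2) R, |f t|^p)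
          = ∫ t in Ioo (R/2) R, m * |f t|^p := (MeasureTheory.integral_const_mul _ _).symm
      have hw_int : IntegrableOn (fun t => |f t|^p * Real.sinh t ^ (N-1)) (Ioo (R/2) R) :=
        hfint.mono_set hSsub
      have h2 : ∫ t in Ioo (R/2) R, m * |f t|^p
          ≤ ∫ t in Ioo (R/2) R, |f t|^p * Real.sinh t ^ (N-1) :=
        setIntegral_mono_on (hfint2.const_mul _) hw_int measurableSet_Ioo
          (fun t ht => hwle t ht (f t))
      have h3 : ∫ t in Ioo (R/2) R, |f t|^p * Real.sinh t ^ (N-1)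
          ≤ ∫ t in Ioo (0:ℝ) R, |f t|^p * Real.sinh t ^ (N-1) := by
        apply setIntegral_mono_set hfint
        · refine (ae_restrict_iff' measurableSet_Ioo).2
            (Filter.Eventually.of_forall fun x hx => mul_nonneg
              (Real.rpow_nonneg (abs_nonneg _) p)
              (pow_nonneg (Real.sinh_nonneg_iff.2 hx.1.le) _))
        · exact Filter.Eventually.of_forall (fun x hx => hSsub hx)
      linarith [h1 ▸ le_trans h2 h3]
    have hva := hcomp v hvC2 hint1 hA_int
    have hvb := hcomp v' hv'C2 hint2 hB_int
    have : m * (A + B) = m * A + m * B := by ring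
    rw [this]
    exact add_le_add hva hvb
  calc |v R| ^ p ≤ C₀ * (A + B) := main
    _ = (C₀ / m) * (m * (A + B)) := by field_simp
    _ ≤ _ := by
        have := mul_le_mul_of_nonneg_left h7 (le_of_lt (by positivity : (0:ℝ) < C₀ / m))
        exact this
end

section
/- Let N, k be positive integers with N > k·p, p ≥ 1 real, R > 0. There exists C > 0 such that for every k-times continuously differentiable v : (0, R] → ℝ with ‖v‖ := (Σ_{j=0}^{k} ∫₀^R |v^{(j)}(t)|^p sinh^{N−1}(t) dt)^{1/p} finite, one has |v(t)| ≤ C · sinh(t)^{−(N−kp)/p} · ‖v‖ for all t ∈ (0, R]. -/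
open MeasureTheory Set Real

lemma lemA {β t R : ℝ} (hβ : 1 < β) (ht : 0 < t) (htR : t ≤ R) :
    ∫ s in Set.Ioo t R, Real.sinh s ^ (-β) ≤ Real.sinh t ^ (1 - β) / (β - 1) := by
  have hsinh : ∀ s ∈ Set.Icc t R, 0 < Real.sinh s := fun s hs =>
    Real.sinh_pos_iff.mpr (lt_of_lt_of_le ht hs.1)
  have hcont : ContinuousOn (fun s => Real.sinh s ^ (-β)) (Set.Icc t R) := by
    apply ContinuousOn.rpow_const (Real.continuous_sinh.continuousOn)
    exact fun s hs => Or.inl (ne_of_gt (hsinh s hs))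
  have hcont2 : ContinuousOn (fun s => Real.cosh s * Real.sinh s ^ (-β)) (Set.Icc t R) :=
    Real.continuous_cosh.continuousOn.mul hcont
  have hderiv : ∀ x ∈ Set.uIcc t R, HasDerivAt (fun s => Real.sinh s ^ (1 - β) / (1 - β))
      (Real.cosh x * Real.sinh x ^ (-β)) x := by
    intro x hx
    rw [Set.uIcc_of_le htR] at hx
    have h1 : HasDerivAt (fun s => Real.sinh s ^ (1 - β))
        (Real.cosh x * (1 - β) * Real.sinh x ^ (1 - β - 1)) x :=
      (Real.hasDerivAt_sinh x).rpow_const (Or.inl (ne_of_gt (hsinh x hx)))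
    rw [show (1:ℝ) - β - 1 = -β by ring] at h1
    have := h1.div_const (1 - β)
    refine this.congr_deriv ?_
    have hb : (1 : ℝ) - β ≠ 0 := by linarith
    rw [mul_right_comm, mul_div_cancel_right₀ _ hb]
  have hftc : ∫ s in t..R, Real.cosh s * Real.sinh s ^ (-β)
      = Real.sinh R ^ (1 - β) / (1 - β) - Real.sinh t ^ (1 - β) / (1 - β) := by
    apply intervalIntegral.integral_eq_sub_of_hasDerivAt hderiv
    exact (hcont2.intervalIntegrable_of_Icc htR)
  have hmono : ∫ s in t..R, Real.sinh s ^ (-β) ≤ ∫ s in t..R, Real.cosh s * Real.sinh s ^ (-β) := by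
    apply intervalIntegral.integral_mono_on htR (hcont.intervalIntegrable_of_Icc htR)
      (hcont2.intervalIntegrable_of_Icc htR)
    intro x hx
    nth_rewrite 1 [← one_mul (Real.sinh x ^ (-β))]
    apply mul_le_mul_of_nonneg_right (Real.one_le_cosh x)
    exact Real.rpow_nonneg (le_of_lt (hsinh x hx)) _
  have heq : ∫ s in Set.Ioo t R, Real.sinh s ^ (-β) = ∫ s in t..R, Real.sinh s ^ (-β) := by
    rw [intervalIntegral.integral_of_le htR, MeasureTheory.integral_Ioc_eq_integral_Ioo]
  rw [heq]
  refine le_trans hmono ?_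
  rw [hftc]
  have h1 : (0:ℝ) < β - 1 := by linarith
  have h2 : 0 ≤ Real.sinh R ^ (1 - β) := Real.rpow_nonneg (le_of_lt (hsinh R ⟨htR, le_refl R⟩)) _
  have heq2 : (Real.sinh R ^ (1 - β) - Real.sinh t ^ (1 - β)) / (1 - β)
      = (Real.sinh t ^ (1 - β) - Real.sinh R ^ (1 - β)) / (β - 1) := by
    have hb : (1 : ℝ) - β ≠ 0 := by linarith
    field_simp
    ring
  rw [div_sub_div_same, heq2]
  gcongr
  linarith

lemma lemB (N : ℕ) {p R : ℝ} (hp : 1 ≤ p) (hR : 0 < R) (hNp : p < N) :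
    ∃ K : ℝ, 0 < K ∧ ∀ (f : ℝ → ℝ), ContinuousOn f (Set.Ioc 0 R) →
      IntegrableOn (fun s => |f s| ^ p * Real.sinh s ^ (N - 1)) (Set.Ioo 0 R) →
      ∀ t, 0 < t → t ≤ R →
      ∫ s in Set.Ioo t R, |f s| ≤
        K * Real.sinh t ^ (-(((N:ℝ) - p)/p)) *
          (∫ s in Set.Ioo 0 R, |f s| ^ p * Real.sinh s ^ (N - 1)) ^ (1/p) := by
  have hN2 : 2 ≤ N := by
    by_contra h
    push_neg at h
    interval_cases N <;> simp_all <;> linarith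
  have hcast : ((N - 1 : ℕ) : ℝ) = (N : ℝ) - 1 := by
    push_cast [Nat.cast_sub (by omega : 1 ≤ N)]; ring
  rcases eq_or_lt_of_le hp with h1 | h1
  · -- p = 1
    subst h1
    refine ⟨1, one_pos, fun f hf hint t ht htR => ?_⟩
    simp only [Real.rpow_one] at hint ⊢
    have hsub : Set.Ioo t R ⊆ Set.Ioo (0:ℝ) R := Set.Ioo_subset_Ioo_left ht.le
    have hintt : IntegrableOn (fun s => |f s| * Real.sinh s ^ (N - 1)) (Set.Ioo t R) :=
      hint.mono_set hsub
    have hst : 0 < Real.sinh t := Real.sinh_pos_iff.mpr ht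
    have hb : ∀ s ∈ Set.Ioo t R,
        |f s| ≤ Real.sinh t ^ (-((N:ℝ) - 1)) * (|f s| * Real.sinh s ^ (N - 1)) := by
      intro s hs
      have hss : Real.sinh t ≤ Real.sinh s := Real.sinh_le_sinh.mpr hs.1.le
      have h1' : (1:ℝ) ≤ Real.sinh t ^ (-((N:ℝ) - 1)) * Real.sinh s ^ (N - 1) := by
        rw [Real.rpow_neg hst.le, ← Real.rpow_natCast (Real.sinh s) (N - 1), hcast,
          inv_mul_eq_div, le_div_iff₀ (Real.rpow_pos_of_pos hst _), one_mul]
        exact Real.rpow_le_rpow hst.le hss (by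
          have hN1R : (1:ℝ) ≤ (N:ℝ) := by exact_mod_cast Nat.one_le_of_lt hN2
          linarith)
      calc |f s| = |f s| * 1 := (mul_one _).symm
        _ ≤ |f s| * (Real.sinh t ^ (-((N:ℝ) - 1)) * Real.sinh s ^ (N - 1)) :=
            mul_le_mul_of_nonneg_left h1' (abs_nonneg _)
        _ = Real.sinh t ^ (-((N:ℝ) - 1)) * (|f s| * Real.sinh s ^ (N - 1)) := by ring
    have hfi : IntegrableOn (fun s => |f s|) (Set.Ioo t R) := by
      have : ContinuousOn (fun s => |f s|) (Set.Icc t R) :=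
        (hf.mono (fun x hx => ⟨lt_of_lt_of_le ht hx.1, hx.2⟩)).abs
      exact this.integrableOn_Icc.mono_set Set.Ioo_subset_Icc_self
    have hmono : ∫ s in Set.Ioo t R, |f s|
        ≤ ∫ s in Set.Ioo t R, Real.sinh t ^ (-((N:ℝ) - 1)) * (|f s| * Real.sinh s ^ (N - 1)) := by
      refine setIntegral_mono_on hfi (hintt.const_mul _) measurableSet_Ioo hb
    calc ∫ s in Set.Ioo t R, |f s|
        ≤ ∫ s in Set.Ioo t R, Real.sinh t ^ (-((N:ℝ) - 1)) * (|f s| * Real.sinh s ^ (N - 1)) :=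
          hmono
      _ = Real.sinh t ^ (-((N:ℝ) - 1)) * ∫ s in Set.Ioo t R, |f s| * Real.sinh s ^ (N - 1) :=
          MeasureTheory.integral_const_mul _ _
      _ ≤ Real.sinh t ^ (-((N:ℝ) - 1)) * ∫ s in Set.Ioo 0 R, |f s| * Real.sinh s ^ (N - 1) := by
          apply mul_le_mul_of_nonneg_left _ (Real.rpow_nonneg hst.le _)
          apply setIntegral_mono_set hint _ (HasSubset.Subset.eventuallyLE hsub)
          filter_upwards [ae_restrict_mem measurableSet_Ioo] with s hs
          exact mul_nonneg (abs_nonneg _) (pow_nonneg (Real.sinh_nonneg_iff.mpr hs.1.le) _)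
      _ = 1 * Real.sinh t ^ (-(((N:ℝ) - 1)/1)) *
            (∫ s in Set.Ioo 0 R, |f s| * Real.sinh s ^ (N - 1)) ^ (1/(1:ℝ)) := by
          rw [one_mul, div_one, div_one, Real.rpow_one]
  · -- p > 1
    have hp0 : (0:ℝ) < p := lt_trans one_pos h1
    have hp0' : p ≠ 0 := ne_of_gt hp0
    set q : ℝ := p / (p - 1) with hq_def
    have hpq : p.HolderConjugate q := (Real.holderConjugate_iff_eq_conjExponent h1).mpr rfl
    have hq0 : 0 < q := hpq.symm.pos
    have hNR : (1:ℝ) < (N:ℝ) := by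
      have : (2:ℝ) ≤ (N:ℝ) := by exact_mod_cast hN2
      linarith
    set γ : ℝ := ((N:ℝ) - 1) / (p - 1) with hγ_def
    have hγ : 1 < γ := by
      rw [hγ_def]
      rw [lt_div_iff₀ (by linarith : (0:ℝ) < p - 1)]
      linarith
    set K : ℝ := (1 / (γ - 1)) ^ (1/q) with hK_def
    have hKpos : 0 < K := Real.rpow_pos_of_pos (div_pos one_pos (by linarith)) _
    refine ⟨K, hKpos, fun f hf hint t ht htR => ?_⟩
    have hsub : Set.Ioo t R ⊆ Set.Ioo (0:ℝ) R := Set.Ioo_subset_Ioo_left ht.le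
    have hintt : IntegrableOn (fun s => |f s| ^ p * Real.sinh s ^ (N - 1)) (Set.Ioo t R) :=
      hint.mono_set hsub
    have hst : 0 < Real.sinh t := Real.sinh_pos_iff.mpr ht
    set μ := volume.restrict (Set.Ioo t R) with hμ
    have hae : ∀ᵐ s ∂μ, s ∈ Set.Ioo t R := ae_restrict_mem measurableSet_Ioo
    set F : ℝ → ℝ := fun s => |f s| * Real.sinh s ^ (((N:ℝ) - 1)/p) with hF_def
    set G : ℝ → ℝ := fun s => Real.sinh s ^ (-(((N:ℝ) - 1)/p)) with hG_def
    have hsinh_pos : ∀ s ∈ Set.Ioo t R, 0 < Real.sinh s := fun s hs =>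
      Real.sinh_pos_iff.mpr (lt_trans ht hs.1)
    -- pointwise identities on the set
    have hFG : ∀ s ∈ Set.Ioo t R, F s * G s = |f s| := by
      intro s hs
      have h := hsinh_pos s hs
      rw [hF_def, hG_def]
      simp only
      rw [mul_assoc, ← Real.rpow_add h]
      simp
    have hFp : ∀ s ∈ Set.Ioo t R, F s ^ p = |f s| ^ p * Real.sinh s ^ (N - 1) := by
      intro s hs
      have h := hsinh_pos s hs
      rw [hF_def]
      simp only
      rw [Real.mul_rpow (abs_nonneg _) (Real.rpow_nonneg h.le _), ← Real.rpow_natCast (Real.sinh s) (N-1),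
        hcast, ← Real.rpow_mul h.le, div_mul_cancel₀ _ hp0']
    have hGq : ∀ s ∈ Set.Ioo t R, G s ^ q = Real.sinh s ^ (-γ) := by
      intro s hs
      have h := hsinh_pos s hs
      rw [hG_def]
      simp only
      rw [← Real.rpow_mul h.le]
      congr 1
      rw [hγ_def, hq_def]
      field_simp
    -- measurability
    have hFcont : ContinuousOn F (Set.Ioo t R) := by
      apply ContinuousOn.mul ((hf.mono (fun x hx => ⟨lt_trans ht hx.1, hx.2.le⟩)).abs)
      apply ContinuousOn.rpow_const Real.continuous_sinh.continuousOn
      exact fun s hs => Or.inl (ne_of_gt (hsinh_pos s hs))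
    have hGcont : ContinuousOn G (Set.Ioo t R) := by
      apply ContinuousOn.rpow_const Real.continuous_sinh.continuousOn
      exact fun s hs => Or.inl (ne_of_gt (hsinh_pos s hs))
    have hFm : AEStronglyMeasurable F μ := hFcont.aestronglyMeasurable measurableSet_Ioo
    have hGm : AEStronglyMeasurable G μ := hGcont.aestronglyMeasurable measurableSet_Ioo
    have hFnn : 0 ≤ᵐ[μ] F := by
      filter_upwards [hae] with s hs
      exact mul_nonneg (abs_nonneg _) (Real.rpow_nonneg (hsinh_pos s hs).le _)
    have hGnn : 0 ≤ᵐ[μ] G := by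
      filter_upwards [hae] with s hs
      exact Real.rpow_nonneg (hsinh_pos s hs).le _
    -- MemLp facts
    have hofp : (ENNReal.ofReal p).toReal = p := ENNReal.toReal_ofReal hp0.le
    have hofq : (ENNReal.ofReal q).toReal = q := ENNReal.toReal_ofReal hq0.le
    have hFmem : MemLp F (ENNReal.ofReal p) μ := by
      have hInt1 : Integrable (fun s => ‖F s‖ ^ p) μ := by
        apply hintt.congr
        filter_upwards [hae] with s hs
        have hFs : 0 ≤ F s :=
          mul_nonneg (abs_nonneg _) (Real.rpow_nonneg (hsinh_pos s hs).le _)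
        rw [Real.norm_of_nonneg hFs, hFp s hs]
      have h2 : MemLp (fun s => ‖F s‖ ^ (ENNReal.ofReal p).toReal)
          (ENNReal.ofReal p / ENNReal.ofReal p) μ := by
        rw [hofp, ENNReal.div_self (by simp [hp0]) (by simp), memLp_one_iff_integrable]
        exact hInt1
      exact (memLp_norm_rpow_iff hFm (by simp [hp0]) (by simp)).mp h2
    have hGγint : IntegrableOn (fun s => Real.sinh s ^ (-γ)) (Set.Ioo t R) := by
      have hc : ContinuousOn (fun s => Real.sinh s ^ (-γ)) (Set.Icc t R) := by
        apply ContinuousOn.rpow_const Real.continuous_sinh.continuousOn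
        exact fun s hs => Or.inl (ne_of_gt (Real.sinh_pos_iff.mpr (lt_of_lt_of_le ht hs.1)))
      exact hc.integrableOn_Icc.mono_set Set.Ioo_subset_Icc_self
    have hGmem : MemLp G (ENNReal.ofReal q) μ := by
      have hInt1 : Integrable (fun s => ‖G s‖ ^ q) μ := by
        apply hGγint.congr
        filter_upwards [hae] with s hs
        have hGs : 0 ≤ G s := Real.rpow_nonneg (hsinh_pos s hs).le _
        rw [Real.norm_of_nonneg hGs, hGq s hs]
      have h2 : MemLp (fun s => ‖G s‖ ^ (ENNReal.ofReal q).toReal)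
          (ENNReal.ofReal q / ENNReal.ofReal q) μ := by
        rw [hofq, ENNReal.div_self (by simp [hq0]) (by simp), memLp_one_iff_integrable]
        exact hInt1
      exact (memLp_norm_rpow_iff hGm (by simp [hq0]) (by simp)).mp h2
    -- Hölder
    have hFmem' : MemLp F (ENNReal.ofReal p) μ := hFmem
    have hHolder := MeasureTheory.integral_mul_le_Lp_mul_Lq_of_nonneg hpq hFnn hGnn hFmem hGmem
    have hLHS : ∫ s, F s * G s ∂μ = ∫ s in Set.Ioo t R, |f s| := by
      apply integral_congr_ae
      filter_upwards [hae] with s hs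
      exact hFG s hs
    have hFpint : ∫ s, F s ^ p ∂μ = ∫ s in Set.Ioo t R, |f s| ^ p * Real.sinh s ^ (N - 1) := by
      apply integral_congr_ae
      filter_upwards [hae] with s hs
      exact hFp s hs
    have hGqint : ∫ s, G s ^ q ∂μ = ∫ s in Set.Ioo t R, Real.sinh s ^ (-γ) := by
      apply integral_congr_ae
      filter_upwards [hae] with s hs
      exact hGq s hs
    -- bound the two factors
    have hXnn : (0:ℝ) ≤ ∫ s in Set.Ioo t R, |f s| ^ p * Real.sinh s ^ (N - 1) := by
      apply setIntegral_nonneg measurableSet_Ioo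
      intro s hs
      exact mul_nonneg (Real.rpow_nonneg (abs_nonneg _) _)
        (pow_nonneg (Real.sinh_nonneg_iff.mpr (lt_trans ht hs.1).le) _)
    have hXle : ∫ s in Set.Ioo t R, |f s| ^ p * Real.sinh s ^ (N - 1)
        ≤ ∫ s in Set.Ioo 0 R, |f s| ^ p * Real.sinh s ^ (N - 1) := by
      apply setIntegral_mono_set hint _ (HasSubset.Subset.eventuallyLE hsub)
      filter_upwards [ae_restrict_mem measurableSet_Ioo] with s hs
      exact mul_nonneg (Real.rpow_nonneg (abs_nonneg _) _)
        (pow_nonneg (Real.sinh_nonneg_iff.mpr hs.1.le) _)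
    have hfac1 : (∫ s, F s ^ p ∂μ) ^ (1/p)
        ≤ (∫ s in Set.Ioo 0 R, |f s| ^ p * Real.sinh s ^ (N - 1)) ^ (1/p) := by
      rw [hFpint]
      exact Real.rpow_le_rpow hXnn hXle (one_div_pos.mpr hp0).le
    have hGint_nn : (0:ℝ) ≤ ∫ s in Set.Ioo t R, Real.sinh s ^ (-γ) := by
      apply setIntegral_nonneg measurableSet_Ioo
      intro s hs
      exact Real.rpow_nonneg (Real.sinh_nonneg_iff.mpr (lt_trans ht hs.1).le) _
    have hfac2 : (∫ s, G s ^ q ∂μ) ^ (1/q) ≤ K * Real.sinh t ^ (-(((N:ℝ) - p)/p)) := by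
      rw [hGqint]
      have hA := lemA hγ ht htR
      have step1 : (∫ s in Set.Ioo t R, Real.sinh s ^ (-γ)) ^ (1/q)
          ≤ (Real.sinh t ^ (1 - γ) / (γ - 1)) ^ (1/q) :=
        Real.rpow_le_rpow hGint_nn hA (one_div_pos.mpr hq0).le
      refine le_trans step1 ?_
      have hpm1 : p - 1 ≠ 0 := ne_of_gt (by linarith)
      have hexp : (1 - γ) * (1/q) = -(((N:ℝ) - p)/p) := by
        rw [hγ_def, hq_def]
        field_simp
        ring
      rw [div_eq_mul_one_div, Real.mul_rpow (Real.rpow_nonneg hst.le _)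
        (le_of_lt (div_pos one_pos (by linarith : (0:ℝ) < γ - 1))),
        ← Real.rpow_mul hst.le, hexp, hK_def, mul_comm]
    -- combine
    have hX0Rnn : (0:ℝ) ≤ ∫ s in Set.Ioo 0 R, |f s| ^ p * Real.sinh s ^ (N - 1) := by
      apply setIntegral_nonneg measurableSet_Ioo
      intro s hs
      exact mul_nonneg (Real.rpow_nonneg (abs_nonneg _) _)
        (pow_nonneg (Real.sinh_nonneg_iff.mpr hs.1.le) _)
    rw [← hLHS]
    calc ∫ s, F s * G s ∂μ
        ≤ (∫ s, F s ^ p ∂μ) ^ (1/p) * (∫ s, G s ^ q ∂μ) ^ (1/q) := hHolder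
      _ ≤ (∫ s in Set.Ioo 0 R, |f s| ^ p * Real.sinh s ^ (N - 1)) ^ (1/p)
            * (K * Real.sinh t ^ (-(((N:ℝ) - p)/p))) := by
          apply mul_le_mul hfac1 hfac2 ?_ (Real.rpow_nonneg hX0Rnn _)
          rw [hGqint]
          exact Real.rpow_nonneg hGint_nn _
      _ = K * Real.sinh t ^ (-(((N:ℝ) - p)/p)) *
            (∫ s in Set.Ioo 0 R, |f s| ^ p * Real.sinh s ^ (N - 1)) ^ (1/p) := by ring

lemma lemFTC {k : ℕ} {R : ℝ} {v : ℝ → ℝ} (hv : ContDiffOn ℝ k v (Set.Ioc 0 R))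
    {j : ℕ} (hj : j < k) {a : ℝ} (ha : 0 < a) (haR : a ≤ R) :
    iteratedDerivWithin j v (Set.Ioc 0 R) R - iteratedDerivWithin j v (Set.Ioc 0 R) a
      = ∫ s in a..R, iteratedDerivWithin (j+1) v (Set.Ioc 0 R) s := by
  have hS : UniqueDiffOn ℝ (Set.Ioc (0:ℝ) R) := uniqueDiffOn_Ioc 0 R
  have hIccS : Set.Icc a R ⊆ Set.Ioc (0:ℝ) R := fun x hx => ⟨lt_of_lt_of_le ha hx.1, hx.2⟩
  have hcont : ContinuousOn (iteratedDerivWithin j v (Set.Ioc 0 R)) (Set.Icc a R) :=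
    (hv.continuousOn_iteratedDerivWithin (by exact_mod_cast hj.le) hS).mono hIccS
  have hcont' : ContinuousOn (iteratedDerivWithin (j+1) v (Set.Ioc 0 R)) (Set.Icc a R) :=
    (hv.continuousOn_iteratedDerivWithin (by exact_mod_cast hj) hS).mono hIccS
  have hderiv : ∀ x ∈ Set.Ioo a R,
      HasDerivWithinAt (iteratedDerivWithin j v (Set.Ioc 0 R))
        (iteratedDerivWithin (j+1) v (Set.Ioc 0 R) x) (Set.Ioi x) x := by
    intro x hx
    have hxS : x ∈ Set.Ioc (0:ℝ) R := ⟨lt_trans ha hx.1, hx.2.le⟩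
    have hdiff : DifferentiableOn ℝ (iteratedDerivWithin j v (Set.Ioc 0 R)) (Set.Ioc 0 R) :=
      hv.differentiableOn_iteratedDerivWithin (by exact_mod_cast hj) hS
    have h1 : HasDerivWithinAt (iteratedDerivWithin j v (Set.Ioc 0 R))
        (derivWithin (iteratedDerivWithin j v (Set.Ioc 0 R)) (Set.Ioc 0 R) x) (Set.Ioc 0 R) x :=
      (hdiff x hxS).hasDerivWithinAt
    have hnhds : Set.Ioc (0:ℝ) R ∈ nhds x :=
      mem_nhds_iff.mpr ⟨Set.Ioo 0 R, Set.Ioo_subset_Ioc_self,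
        isOpen_Ioo, ⟨lt_trans ha hx.1, hx.2⟩⟩
    have h2 : HasDerivAt (iteratedDerivWithin j v (Set.Ioc 0 R))
        (derivWithin (iteratedDerivWithin j v (Set.Ioc 0 R)) (Set.Ioc 0 R) x) x :=
      h1.hasDerivAt hnhds
    rw [iteratedDerivWithin_succ]
    exact h2.hasDerivWithinAt
  rw [← intervalIntegral.integral_eq_sub_of_hasDeriv_right_of_le haR hcont hderiv
    (hcont'.intervalIntegrable_of_Icc haR)]

theorem stmt12 (N k : ℕ) (p R : ℝ) (hk : 0 < k) (hp : 1 ≤ p) (hR : 0 < R)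
    (hNkp : (k : ℝ) * p < N) :
    ∃ C : ℝ, 0 < C ∧ ∀ v : ℝ → ℝ, ContDiffOn ℝ k v (Set.Ioc 0 R) →
      (∀ j : ℕ, j ≤ k →
        IntegrableOn
          (fun t => |iteratedDerivWithin j v (Set.Ioc 0 R) t| ^ p * Real.sinh t ^ (N - 1))
          (Set.Ioo 0 R)) →
      ∀ t ∈ Set.Ioc (0:ℝ) R,
        |v t| ≤ C * Real.sinh t ^ (-(((N : ℝ) - k * p) / p)) *
          (∑ j ∈ Finset.range (k + 1),
            ∫ s in Set.Ioo (0:ℝ) R,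
              |iteratedDerivWithin j v (Set.Ioc 0 R) s| ^ p * Real.sinh s ^ (N - 1)) ^ (1 / p) := by
  have hp0 : (0:ℝ) < p := lt_of_lt_of_le one_pos hp
  have hk1 : (1:ℝ) ≤ (k:ℝ) := by exact_mod_cast hk
  have hpN : p < (N:ℝ) := by nlinarith
  have hS : UniqueDiffOn ℝ (Set.Ioc (0:ℝ) R) := uniqueDiffOn_Ioc 0 R
  obtain ⟨KB, hKB, hB⟩ := lemB N hp hR hpN
  set α : ℝ := ((N:ℝ) - p)/p with hα_def
  have hα0 : 0 < α := div_pos (by linarith) hp0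
  have hR2 : (0:ℝ) < R/2 := by linarith
  set E : ℝ := KB * Real.sinh (R/2) ^ (-α) with hE_def
  have hE : 0 < E := mul_pos hKB (Real.rpow_pos_of_pos (Real.sinh_pos_iff.mpr hR2) _)
  set CE : ℝ := (4/R + 1) * E with hCE_def
  have hCE : 0 < CE := mul_pos (by positivity) hE
  -- notation shortcuts
  have hIccS : ∀ {c : ℝ}, 0 < c → Set.Icc c R ⊆ Set.Ioc (0:ℝ) R := fun hc x hx =>
    ⟨lt_of_lt_of_le hc hx.1, hx.2⟩
  -- sum nonnegativity and term bounds, for any v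
  have hterm_nn : ∀ (v : ℝ → ℝ) (i : ℕ),
      (0:ℝ) ≤ ∫ s in Set.Ioo (0:ℝ) R,
        |iteratedDerivWithin i v (Set.Ioc 0 R) s| ^ p * Real.sinh s ^ (N - 1) := by
    intro v i
    apply setIntegral_nonneg measurableSet_Ioo
    intro s hs
    exact mul_nonneg (Real.rpow_nonneg (abs_nonneg _) _)
      (pow_nonneg (Real.sinh_nonneg_iff.mpr hs.1.le) _)
  -- endpoint bound
  have hend : ∀ (v : ℝ → ℝ), ContDiffOn ℝ k v (Set.Ioc 0 R) →
      (∀ i : ℕ, i ≤ k →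
        IntegrableOn
          (fun s => |iteratedDerivWithin i v (Set.Ioc 0 R) s| ^ p * Real.sinh s ^ (N - 1))
          (Set.Ioo 0 R)) →
      ∀ j : ℕ, j < k →
      |iteratedDerivWithin j v (Set.Ioc 0 R) R| ≤
        CE * (∑ i ∈ Finset.range (k + 1),
          ∫ s in Set.Ioo (0:ℝ) R,
            |iteratedDerivWithin i v (Set.Ioc 0 R) s| ^ p * Real.sinh s ^ (N - 1)) ^ (1/p) := by
    intro v hv hint j hj
    set f : ℕ → ℝ → ℝ := fun i => iteratedDerivWithin i v (Set.Ioc 0 R) with hf_def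
    set M : ℝ := (∑ i ∈ Finset.range (k + 1),
      ∫ s in Set.Ioo (0:ℝ) R, |f i s| ^ p * Real.sinh s ^ (N - 1)) ^ (1/p) with hM_def
    have hMnn : 0 ≤ M := Real.rpow_nonneg
      (Finset.sum_nonneg fun i _ => hterm_nn v i) _
    have hT : ∀ i : ℕ, i ≤ k →
        (∫ s in Set.Ioo (0:ℝ) R, |f i s| ^ p * Real.sinh s ^ (N - 1)) ^ (1/p) ≤ M := by
      intro i hi
      apply Real.rpow_le_rpow (hterm_nn v i)
        (Finset.single_le_sum (fun i _ => hterm_nn v i) (Finset.mem_range.mpr (by omega)))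
        (by positivity)
    have hcont : ∀ i : ℕ, i ≤ k → ContinuousOn (f i) (Set.Ioc 0 R) := fun i hi =>
      hv.continuousOn_iteratedDerivWithin (by exact_mod_cast hi) hS
    -- the L1 bound on Ioo (R/2) R for any i ≤ k
    have hL1 : ∀ i : ℕ, i ≤ k → ∫ s in Set.Ioo (R/2) R, |f i s| ≤ E * M := by
      intro i hi
      calc ∫ s in Set.Ioo (R/2) R, |f i s|
          ≤ KB * Real.sinh (R/2) ^ (-α) *
            (∫ s in Set.Ioo (0:ℝ) R, |f i s| ^ p * Real.sinh s ^ (N - 1)) ^ (1/p) :=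
            hB (f i) (hcont i hi) (hint i hi) (R/2) hR2 (by linarith)
        _ ≤ E * M := by
            rw [hE_def]
            exact mul_le_mul_of_nonneg_left (hT i hi)
              (mul_pos hKB (Real.rpow_pos_of_pos (Real.sinh_pos_iff.mpr hR2) _)).le
    -- minimum point on Icc (3R/4) R
    have h34 : (0:ℝ) < 3*R/4 := by linarith
    have h34R : 3*R/4 ≤ R := by linarith
    have hcabs : ContinuousOn (fun s => |f j s|) (Set.Icc (3*R/4) R) :=
      ((hcont j hj.le).mono (hIccS h34)).abs
    obtain ⟨s₀, hs₀mem, hmin⟩ := isCompact_Icc.exists_isMinOn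
      (Set.nonempty_Icc.mpr h34R) hcabs
    have hs₀pos : 0 < s₀ := lt_of_lt_of_le h34 hs₀mem.1
    have hs₀R : s₀ ≤ R := hs₀mem.2
    -- |f j s₀| ≤ (4/R) * ∫_{Ioo (R/2) R} |f j|
    have habs_int : IntegrableOn (fun s => |f j s|) (Set.Ioo (R/2) R) :=
      (((hcont j hj.le).mono (hIccS hR2)).abs).integrableOn_Icc.mono_set
        Set.Ioo_subset_Icc_self
    have hstep1 : |f j s₀| ≤ (4/R) * ∫ s in Set.Ioo (R/2) R, |f j s| := by
      have hconst : ∫ _s in Set.Ioo (3*R/4) R, |f j s₀| = (R/4) * |f j s₀| := by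
        rw [setIntegral_const, Real.volume_real_Ioo_of_le (by linarith), smul_eq_mul]
        ring
      have hmono1 : ∫ _s in Set.Ioo (3*R/4) R, |f j s₀| ≤ ∫ s in Set.Ioo (3*R/4) R, |f j s| := by
        apply setIntegral_mono_on ((integrableOn_const_iff).mpr (Or.inr (by
          rw [Real.volume_Ioo]; exact ENNReal.ofReal_lt_top)))
          (habs_int.mono_set (fun x hx => ⟨by linarith [hx.1], hx.2⟩)) measurableSet_Ioo
        intro x hx
        exact hmin ⟨hx.1.le, hx.2.le⟩
      have hmono2 : ∫ s in Set.Ioo (3*R/4) R, |f j s| ≤ ∫ s in Set.Ioo (R/2) R, |f j s| := by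
        apply setIntegral_mono_set habs_int
        · filter_upwards [ae_restrict_mem measurableSet_Ioo] with s _
          exact abs_nonneg _
        · exact HasSubset.Subset.eventuallyLE (fun x hx => ⟨by linarith [hx.1], hx.2⟩)
      have h4R : (0:ℝ) < 4/R := by positivity
      calc |f j s₀| = (4/R) * ((R/4) * |f j s₀|) := by field_simp
        _ ≤ (4/R) * ∫ s in Set.Ioo (R/2) R, |f j s| := by
            apply mul_le_mul_of_nonneg_left _ h4R.le
            rw [← hconst]
            exact le_trans hmono1 hmono2
    -- FTC from s₀ to R
    have hftc := lemFTC hv hj hs₀pos hs₀R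
    have hintabs : |∫ s in s₀..R, f (j+1) s| ≤ ∫ s in Set.Ioo (R/2) R, |f (j+1) s| := by
      have h1 := intervalIntegral.abs_integral_le_integral_abs (f := f (j+1)) (μ := volume) hs₀R
      have h2 : ∫ s in s₀..R, |f (j+1) s| = ∫ s in Set.Ioo s₀ R, |f (j+1) s| := by
        rw [intervalIntegral.integral_of_le hs₀R, MeasureTheory.integral_Ioc_eq_integral_Ioo]
      have h3 : ∫ s in Set.Ioo s₀ R, |f (j+1) s| ≤ ∫ s in Set.Ioo (R/2) R, |f (j+1) s| := by
        apply setIntegral_mono_set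
          ((((hcont (j+1) hj).mono (hIccS hR2)).abs).integrableOn_Icc.mono_set
            Set.Ioo_subset_Icc_self)
        · filter_upwards [ae_restrict_mem measurableSet_Ioo] with s _
          exact abs_nonneg _
        · refine HasSubset.Subset.eventuallyLE (fun x hx => ⟨?_, hx.2⟩)
          have : R/2 ≤ s₀ := by linarith [hs₀mem.1]
          linarith [hx.1]
      rw [h2] at h1
      exact le_trans h1 h3
    have : f j R = f j s₀ + ∫ s in s₀..R, f (j+1) s := by
      rw [← hftc]; ring
    calc |f j R| ≤ |f j s₀| + |∫ s in s₀..R, f (j+1) s| := by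
          rw [this]; exact abs_add_le _ _
      _ ≤ (4/R) * (∫ s in Set.Ioo (R/2) R, |f j s|) + ∫ s in Set.Ioo (R/2) R, |f (j+1) s| :=
          add_le_add hstep1 hintabs
      _ ≤ (4/R) * (E * M) + E * M := by
          apply add_le_add _ (hL1 (j+1) hj)
          exact mul_le_mul_of_nonneg_left (hL1 j hj.le) (by positivity)
      _ = CE * M := by rw [hCE_def]; ring
  -- main induction
  have key : ∀ j : ℕ, 1 ≤ j → j ≤ k → ∃ C : ℝ, 0 < C ∧ ∀ v : ℝ → ℝ,
      ContDiffOn ℝ k v (Set.Ioc 0 R) →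
      (∀ i : ℕ, i ≤ k →
        IntegrableOn
          (fun s => |iteratedDerivWithin i v (Set.Ioc 0 R) s| ^ p * Real.sinh s ^ (N - 1))
          (Set.Ioo 0 R)) →
      ∀ t ∈ Set.Ioc (0:ℝ) R,
        |iteratedDerivWithin (k - j) v (Set.Ioc 0 R) t| ≤
          C * Real.sinh t ^ (-(((N:ℝ) - (j:ℝ) * p)/p)) *
          (∑ i ∈ Finset.range (k + 1),
            ∫ s in Set.Ioo (0:ℝ) R,
              |iteratedDerivWithin i v (Set.Ioc 0 R) s| ^ p * Real.sinh s ^ (N - 1)) ^ (1/p) := by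
    intro j hj1
    induction j, hj1 using Nat.le_induction with
    | base =>
      intro hjk
      refine ⟨CE * Real.sinh R ^ α + KB, by positivity, ?_⟩
      intro v hv hint t ht
      set f : ℕ → ℝ → ℝ := fun i => iteratedDerivWithin i v (Set.Ioc 0 R) with hf_def
      set M : ℝ := (∑ i ∈ Finset.range (k + 1),
        ∫ s in Set.Ioo (0:ℝ) R, |f i s| ^ p * Real.sinh s ^ (N - 1)) ^ (1/p) with hM_def
      have hMnn : 0 ≤ M := Real.rpow_nonneg
        (Finset.sum_nonneg fun i _ => hterm_nn v i) _
      have hT : (∫ s in Set.Ioo (0:ℝ) R, |f k s| ^ p * Real.sinh s ^ (N - 1)) ^ (1/p) ≤ M :=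
        Real.rpow_le_rpow (hterm_nn v k)
          (Finset.single_le_sum (fun i _ => hterm_nn v i) (Finset.mem_range.mpr (by omega)))
          (by positivity)
      have hkm1 : k - 1 + 1 = k := by omega
      have hkm1lt : k - 1 < k := by omega
      have hst : 0 < Real.sinh t := Real.sinh_pos_iff.mpr ht.1
      have hstR : Real.sinh t ≤ Real.sinh R := Real.sinh_le_sinh.mpr ht.2
      have hone : (1:ℝ) ≤ Real.sinh R ^ α * Real.sinh t ^ (-α) := by
        have h1 : Real.sinh R ^ (-α) ≤ Real.sinh t ^ (-α) :=
          Real.rpow_le_rpow_of_nonpos hst hstR (by linarith)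
        calc (1:ℝ) = Real.sinh R ^ α * Real.sinh R ^ (-α) := by
              rw [← Real.rpow_add (Real.sinh_pos_iff.mpr (lt_of_lt_of_le ht.1 ht.2))]
              simp
          _ ≤ Real.sinh R ^ α * Real.sinh t ^ (-α) :=
              mul_le_mul_of_nonneg_left h1 (Real.rpow_nonneg (Real.sinh_nonneg_iff.mpr
                (by linarith [ht.1, ht.2] : (0:ℝ) ≤ R)) _)
      -- FTC
      have hftc := lemFTC hv hkm1lt ht.1 ht.2
      rw [hkm1] at hftc
      have hval : f (k-1) t = f (k-1) R - ∫ s in t..R, f k s := by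
        have := hftc
        rw [hf_def]
        simp only
        linarith [this]
      have hintabs : |∫ s in t..R, f k s| ≤ ∫ s in Set.Ioo t R, |f k s| := by
        have h1 := intervalIntegral.abs_integral_le_integral_abs (f := f k) (μ := volume) ht.2
        have h2 : ∫ s in t..R, |f k s| = ∫ s in Set.Ioo t R, |f k s| := by
          rw [intervalIntegral.integral_of_le ht.2, MeasureTheory.integral_Ioc_eq_integral_Ioo]
        exact h1.trans_eq h2
      have hcontk : ContinuousOn (f k) (Set.Ioc 0 R) :=
        hv.continuousOn_iteratedDerivWithin le_rfl hS
      have hBk := hB (f k) hcontk (hint k le_rfl) t ht.1 ht.2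
      have hendk := hend v hv hint (k-1) hkm1lt
      calc |f (k-1) t| ≤ |f (k-1) R| + |∫ s in t..R, f k s| := by
            rw [hval]; exact abs_sub _ _
        _ ≤ CE * M + KB * Real.sinh t ^ (-α) *
              (∫ s in Set.Ioo (0:ℝ) R, |f k s| ^ p * Real.sinh s ^ (N - 1)) ^ (1/p) :=
            add_le_add hendk (le_trans hintabs hBk)
        _ ≤ CE * (Real.sinh R ^ α * Real.sinh t ^ (-α)) * M + KB * Real.sinh t ^ (-α) * M := by
            apply add_le_add
            · nth_rewrite 1 [show CE * M = CE * 1 * M by ring]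
              apply mul_le_mul_of_nonneg_right _ hMnn
              exact mul_le_mul_of_nonneg_left hone hCE.le
            · exact mul_le_mul_of_nonneg_left hT
                (mul_nonneg hKB.le (Real.rpow_nonneg hst.le _))
        _ = (CE * Real.sinh R ^ α + KB) * Real.sinh t ^ (-α) * M := by ring
        _ = (CE * Real.sinh R ^ α + KB) * Real.sinh t ^ (-(((N:ℝ) - ((1:ℕ):ℝ) * p)/p)) * M := by
            norm_num [hα_def]
      done
    | succ j hj IH =>
      intro hjk
      obtain ⟨Cj, hCj, hIH⟩ := IH (by omega)
      set β : ℝ := ((N:ℝ) - (j:ℝ)*p)/p with hβ_def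
      have hjk1 : ((j:ℝ) + 1) * p ≤ (k:ℝ) * p := by
        have : (j:ℝ) + 1 ≤ (k:ℝ) := by exact_mod_cast hjk
        nlinarith
      have hβ1 : 1 < β := by
        rw [hβ_def, lt_div_iff₀ hp0]
        nlinarith
      have hα' : (0:ℝ) < β - 1 := by linarith
      refine ⟨CE * Real.sinh R ^ (β - 1) + Cj / (β - 1), by positivity, ?_⟩
      intro v hv hint t ht
      set f : ℕ → ℝ → ℝ := fun i => iteratedDerivWithin i v (Set.Ioc 0 R) with hf_def
      set M : ℝ := (∑ i ∈ Finset.range (k + 1),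
        ∫ s in Set.Ioo (0:ℝ) R, |f i s| ^ p * Real.sinh s ^ (N - 1)) ^ (1/p) with hM_def
      have hMnn : 0 ≤ M := Real.rpow_nonneg
        (Finset.sum_nonneg fun i _ => hterm_nn v i) _
      have hidx : k - (j+1) + 1 = k - j := by omega
      have hidxlt : k - (j+1) < k := by omega
      have hst : 0 < Real.sinh t := Real.sinh_pos_iff.mpr ht.1
      have hstR : Real.sinh t ≤ Real.sinh R := Real.sinh_le_sinh.mpr ht.2
      have hone : (1:ℝ) ≤ Real.sinh R ^ (β-1) * Real.sinh t ^ (-(β-1)) := by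
        have h1 : Real.sinh R ^ (-(β-1)) ≤ Real.sinh t ^ (-(β-1)) :=
          Real.rpow_le_rpow_of_nonpos hst hstR (by linarith)
        calc (1:ℝ) = Real.sinh R ^ (β-1) * Real.sinh R ^ (-(β-1)) := by
              rw [← Real.rpow_add (Real.sinh_pos_iff.mpr (lt_of_lt_of_le ht.1 ht.2))]
              simp
          _ ≤ Real.sinh R ^ (β-1) * Real.sinh t ^ (-(β-1)) :=
              mul_le_mul_of_nonneg_left h1 (Real.rpow_nonneg (Real.sinh_nonneg_iff.mpr
                (by linarith [ht.1, ht.2] : (0:ℝ) ≤ R)) _)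
      -- FTC
      have hftc := lemFTC hv hidxlt ht.1 ht.2
      rw [hidx] at hftc
      have hval : f (k-(j+1)) t = f (k-(j+1)) R - ∫ s in t..R, f (k-j) s := by
        rw [hf_def]
        simp only
        linarith [hftc]
      have hintabs : |∫ s in t..R, f (k-j) s| ≤ ∫ s in Set.Ioo t R, |f (k-j) s| := by
        have h1 := intervalIntegral.abs_integral_le_integral_abs (f := f (k-j)) (μ := volume) ht.2
        have h2 : ∫ s in t..R, |f (k-j) s| = ∫ s in Set.Ioo t R, |f (k-j) s| := by
          rw [intervalIntegral.integral_of_le ht.2, MeasureTheory.integral_Ioc_eq_integral_Ioo]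
        exact h1.trans_eq h2
      -- pointwise bound for f (k-j) from IH and integrate
      have hpoint : ∀ s ∈ Set.Ioo t R, |f (k-j) s| ≤ (Cj * M) * Real.sinh s ^ (-β) := by
        intro s hs
        have := hIH v hv hint s ⟨lt_trans ht.1 hs.1, hs.2.le⟩
        calc |f (k-j) s| ≤ Cj * Real.sinh s ^ (-β) * M := this
          _ = (Cj * M) * Real.sinh s ^ (-β) := by ring
      have habs_int : IntegrableOn (fun s => |f (k-j) s|) (Set.Ioo t R) := by
        have hcm : ContinuousOn (f (k-j)) (Set.Ioc 0 R) :=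
          hv.continuousOn_iteratedDerivWithin (by exact_mod_cast Nat.sub_le k j) hS
        exact ((hcm.mono (hIccS ht.1)).abs).integrableOn_Icc.mono_set Set.Ioo_subset_Icc_self
      have hbound_int : IntegrableOn (fun s => (Cj * M) * Real.sinh s ^ (-β)) (Set.Ioo t R) := by
        have hc : ContinuousOn (fun s => Real.sinh s ^ (-β)) (Set.Icc t R) := by
          apply ContinuousOn.rpow_const Real.continuous_sinh.continuousOn
          exact fun s hs => Or.inl (ne_of_gt (Real.sinh_pos_iff.mpr (lt_of_lt_of_le ht.1 hs.1)))
        exact ((hc.integrableOn_Icc).mono_set Set.Ioo_subset_Icc_self).const_mul _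
      have hint2 : ∫ s in Set.Ioo t R, |f (k-j) s| ≤ (Cj * M) * (Real.sinh t ^ (1-β) / (β-1)) := by
        calc ∫ s in Set.Ioo t R, |f (k-j) s|
            ≤ ∫ s in Set.Ioo t R, (Cj * M) * Real.sinh s ^ (-β) :=
              setIntegral_mono_on habs_int hbound_int measurableSet_Ioo hpoint
          _ = (Cj * M) * ∫ s in Set.Ioo t R, Real.sinh s ^ (-β) :=
              MeasureTheory.integral_const_mul _ _
          _ ≤ (Cj * M) * (Real.sinh t ^ (1-β) / (β-1)) :=
              mul_le_mul_of_nonneg_left (lemA hβ1 ht.1 ht.2) (mul_nonneg hCj.le hMnn)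
      have hendk := hend v hv hint (k-(j+1)) hidxlt
      have hfinal : |f (k-(j+1)) t| ≤
          (CE * Real.sinh R ^ (β-1) + Cj/(β-1)) * Real.sinh t ^ (-(β-1)) * M := by
        calc |f (k-(j+1)) t| ≤ |f (k-(j+1)) R| + |∫ s in t..R, f (k-j) s| := by
              rw [hval]; exact abs_sub _ _
          _ ≤ CE * M + (Cj * M) * (Real.sinh t ^ (1-β) / (β-1)) :=
              add_le_add hendk (le_trans hintabs hint2)
          _ ≤ CE * (Real.sinh R ^ (β-1) * Real.sinh t ^ (-(β-1))) * M
                + (Cj/(β-1)) * Real.sinh t ^ (-(β-1)) * M := by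
              apply add_le_add
              · nth_rewrite 1 [show CE * M = CE * 1 * M by ring]
                apply mul_le_mul_of_nonneg_right _ hMnn
                exact mul_le_mul_of_nonneg_left hone hCE.le
              · rw [show (1:ℝ) - β = -(β-1) by ring]
                apply le_of_eq
                ring
          _ = (CE * Real.sinh R ^ (β-1) + Cj/(β-1)) * Real.sinh t ^ (-(β-1)) * M := by ring
      have hexp2 : -(((N:ℝ) - (((j:ℕ)+1:ℕ):ℝ) * p)/p) = -(β-1) := by
        rw [hβ_def]
        push_cast
        field_simp
        ring
      rw [hexp2]
      exact hfinal
  obtain ⟨C, hC, hkey⟩ := key k hk le_rfl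
  refine ⟨C, hC, ?_⟩
  intro v hv hint t ht
  have h := hkey v hv hint t ht
  rwa [Nat.sub_self, iteratedDerivWithin_zero] at h
end

section
/- Let p > 1, k a positive integer with N = kp, and R > 0. There exists a constant C > 0 (depending only on k, p, R) such that for every k-times continuously differentiable v : (0, R] → ℝ with ‖v‖ := (Σ_{j=0}^{k} ∫₀^R |v^{(j)}(t)|^p sinh^{N−1}(t) dt)^{1/p} finite, one has for all t ∈ (0, R]: |v(t)| ≤ (log( tanh(R/2) / tanh(t/2) ))^{(p−1)/p} · ( ∫₀^R |v^{(k)}(s)|^p sinh^{N−1}(s) ds )^{1/p} / (k−1)! + C·‖v‖. -/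
open MeasureTheory Set
open scoped Topology

namespace Stmt13Aux

lemma iterDW_congr_set {f : ℝ → ℝ} {s t : Set ℝ} {x : ℝ} (h : s =ᶠ[𝓝 x] t) (n : ℕ) :
    iteratedDerivWithin n f s x = iteratedDerivWithin n f t x := by
  simp only [iteratedDerivWithin_eq_iteratedFDerivWithin, iteratedFDerivWithin_congr_set h n]

lemma memLp_of_int {r : ℝ} (hr : 0 < r) {μ : Measure ℝ} (H : ℝ → ℝ)
    (h0 : 0 ≤ᵐ[μ] H) (hm : AEStronglyMeasurable H μ)
    (hint : Integrable (fun x => H x ^ r) μ) :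
    MemLp H (ENNReal.ofReal r) μ := by
  have h1 : ENNReal.ofReal r ≠ 0 := by simp [ENNReal.ofReal_eq_zero, not_le, hr]
  have h2 : ENNReal.ofReal r ≠ ⊤ := ENNReal.ofReal_ne_top
  have hiff := memLp_norm_rpow_iff (p := ENNReal.ofReal r) (q := ENNReal.ofReal r) hm h1 h2
  rw [ENNReal.div_self h1 h2] at hiff
  rw [← hiff, memLp_one_iff_integrable]
  refine hint.congr ?_
  filter_upwards [h0] with x hx
  rw [Real.norm_eq_abs, abs_of_nonneg hx, ENNReal.toReal_ofReal hr.le]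

lemma holder_aux {p q : ℝ} (hpq : Real.HolderConjugate p q) {s : Set ℝ}
    (F G : ℝ → ℝ)
    (hF0 : 0 ≤ᵐ[volume.restrict s] F) (hG0 : 0 ≤ᵐ[volume.restrict s] G)
    (hFm : AEStronglyMeasurable F (volume.restrict s))
    (hGm : AEStronglyMeasurable G (volume.restrict s))
    (hFp : IntegrableOn (fun x => F x ^ p) s) (hGq : IntegrableOn (fun x => G x ^ q) s) :
    ∫ x in s, F x * G x ≤ (∫ x in s, F x ^ p) ^ (1/p) * (∫ x in s, G x ^ q) ^ (1/q) :=
  integral_mul_le_Lp_mul_Lq_of_nonneg hpq hF0 hG0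
    (memLp_of_int hpq.pos F hF0 hFm hFp) (memLp_of_int hpq.symm.pos G hG0 hGm hGq)

lemma log_tanh_hasDerivAt {y : ℝ} (hy : 0 < y) :
    HasDerivAt (fun z => Real.log (Real.sinh (z / 2)) - Real.log (Real.cosh (z / 2)))
      (Real.sinh y)⁻¹ y := by
  have hs : 0 < Real.sinh (y / 2) := by
    rw [Real.sinh_pos_iff]; linarith
  have hc : 0 < Real.cosh (y / 2) := Real.cosh_pos _
  have hhalf : HasDerivAt (fun z : ℝ => z / 2) (1 / 2) y := by
    simpa using (hasDerivAt_id y).div_const 2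
  have h1 : HasDerivAt (fun z => Real.sinh (z / 2)) (Real.cosh (y / 2) * (1 / 2)) y :=
    by have := (Real.hasDerivAt_sinh (y / 2)).comp y hhalf; exact this
  have h2 : HasDerivAt (fun z => Real.cosh (z / 2)) (Real.sinh (y / 2) * (1 / 2)) y :=
    by have := (Real.hasDerivAt_cosh (y / 2)).comp y hhalf; exact this
  have h3 := (h1.log hs.ne').sub (h2.log hc.ne')
  refine h3.congr_deriv ?_
  symm
  have h4 : Real.sinh y = 2 * Real.sinh (y / 2) * Real.cosh (y / 2) := by
    have := Real.sinh_two_mul (y / 2)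
    rw [show 2 * (y / 2) = y by ring] at this
    exact this
  have h5 := Real.cosh_sq_sub_sinh_sq (y / 2)
  rw [h4]
  field_simp
  nlinarith [hs, hc, h5, mul_pos hs hc]

lemma integral_inv_sinh {t R : ℝ} (ht : 0 < t) (htR : t ≤ R) :
    ∫ y in Ioo t R, (Real.sinh y)⁻¹ =
      Real.log (Real.tanh (R / 2) / Real.tanh (t / 2)) := by
  have key : ∀ x : ℝ, 0 < x →
      Real.log (Real.sinh (x / 2)) - Real.log (Real.cosh (x / 2)) =
        Real.log (Real.tanh (x / 2)) := by
    intro x hx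
    rw [Real.tanh_eq_sinh_div_cosh, Real.log_div]
    · exact (ne_of_gt (by rw [Real.sinh_pos_iff]; linarith))
    · exact (Real.cosh_pos _).ne'
  have hint : IntervalIntegrable (fun y => (Real.sinh y)⁻¹) volume t R := by
    apply ContinuousOn.intervalIntegrable_of_Icc htR
    apply ContinuousOn.inv₀ Real.continuous_sinh.continuousOn
    intro y hy
    exact ne_of_gt (by rw [Real.sinh_pos_iff]; exact lt_of_lt_of_le ht hy.1)
  have := intervalIntegral.integral_eq_sub_of_hasDerivAt
    (f := fun z => Real.log (Real.sinh (z / 2)) - Real.log (Real.cosh (z / 2)))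
    (f' := fun y => (Real.sinh y)⁻¹)
    (fun y hy => by
      rw [uIcc_of_le htR] at hy
      exact log_tanh_hasDerivAt (lt_of_lt_of_le ht hy.1)) hint
  beta_reduce at this
  have htanh : ∀ x : ℝ, 0 < x → (0:ℝ) < Real.tanh (x / 2) := by
    intro x hx
    rw [Real.tanh_eq_sinh_div_cosh]
    have : 0 < Real.sinh (x / 2) := by rw [Real.sinh_pos_iff]; linarith
    positivity
  rw [← MeasureTheory.integral_Ioc_eq_integral_Ioo, ← intervalIntegral.integral_of_le htR, this,
    key R (lt_of_lt_of_le ht htR), key t ht,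
    Real.log_div (htanh R (lt_of_lt_of_le ht htR)).ne' (htanh t ht).ne']

end Stmt13Aux

namespace Stmt13Aux

lemma boundary_aux {a b : ℝ} (hab : a < b) {g g' : ℝ → ℝ}
    (hg : ContinuousOn g (Icc a b)) (hg' : ContinuousOn g' (Icc a b))
    (hd : ∀ y ∈ Ioo a b, HasDerivAt g (g' y) y) :
    |g b| * (b - a) ≤ (∫ y in Ioo a b, |g y|) + (∫ y in Ioo a b, |g' y|) * (b - a) := by
  set K := ∫ y in Ioo a b, |g' y| with hK
  have hig' : IntegrableOn (fun y => |g' y|) (Ioo a b) :=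
    (hg'.abs.integrableOn_compact isCompact_Icc).mono_set Ioo_subset_Icc_self
  have hig : IntegrableOn (fun y => |g y|) (Ioo a b) :=
    (hg.abs.integrableOn_compact isCompact_Icc).mono_set Ioo_subset_Icc_self
  have step : ∀ s ∈ Ioo a b, |g b| ≤ |g s| + K := by
    intro s hs
    have hsb : s ≤ b := hs.2.le
    have hIcc : Icc s b ⊆ Icc a b := Icc_subset_Icc hs.1.le le_rfl
    have hftc : ∫ y in s..b, g' y = g b - g s := by
      apply intervalIntegral.integral_eq_sub_of_hasDeriv_right_of_le hsb (hg.mono hIcc)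
      · intro y hy
        exact (hd y ⟨lt_trans hs.1 hy.1, hy.2⟩).hasDerivWithinAt
      · exact (hg'.mono hIcc).intervalIntegrable_of_Icc hsb
    have habs : |g b - g s| ≤ K := by
      rw [← hftc, intervalIntegral.integral_of_le hsb,
        MeasureTheory.integral_Ioc_eq_integral_Ioo]
      calc |∫ y in Ioo s b, g' y| ≤ ∫ y in Ioo s b, |g' y| := by
            simpa [Real.norm_eq_abs] using
              MeasureTheory.norm_integral_le_integral_norm (μ := volume.restrict (Ioo s b)) g'
        _ ≤ K := by
            apply setIntegral_mono_set hig'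
              (Filter.Eventually.of_forall fun y => abs_nonneg _)
            exact HasSubset.Subset.eventuallyLE (Ioo_subset_Ioo_left hs.1.le)
    calc |g b| = |g s + (g b - g s)| := by ring_nf
      _ ≤ |g s| + |g b - g s| := abs_add_le _ _
      _ ≤ |g s| + K := by linarith
  have hvollt : volume (Ioo a b) < ⊤ := by
    rw [Real.volume_Ioo]; exact ENNReal.ofReal_lt_top
  have hvol : volume.real (Ioo a b) = b - a := by
    rw [measureReal_def, Real.volume_Ioo, ENNReal.toReal_ofReal (by linarith)]
  have hconst : IntegrableOn (fun _ : ℝ => K) (Ioo a b) volume :=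
    integrableOn_const hvollt.ne
  have hmono := setIntegral_mono_on (μ := volume)
    (f := fun _ : ℝ => |g b|) (g := fun y => |g y| + K)
    (integrableOn_const hvollt.ne) (hig.add hconst) measurableSet_Ioo step
  rw [setIntegral_const, hvol, smul_eq_mul,
    integral_add hig hconst, setIntegral_const, hvol, smul_eq_mul] at hmono
  linarith [hmono]

end Stmt13Aux
open MeasureTheory Set
open scoped Topology
section Main
open Stmt13Aux

set_option maxHeartbeats 1000000 in
theorem stmt13 (k : ℕ) (p R : ℝ) (hk : 0 < k) (hp : 1 < p) (hR : 0 < R)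
    (N : ℕ) (hN : (N : ℝ) = k * p) :
    ∃ C : ℝ, 0 < C ∧ ∀ v : ℝ → ℝ, ContDiffOn ℝ k v (Set.Ioc 0 R) →
      (∀ j : ℕ, j ≤ k →
        IntegrableOn
          (fun t => |iteratedDerivWithin j v (Set.Ioc 0 R) t| ^ p * Real.sinh t ^ (N - 1))
          (Set.Ioo 0 R)) →
      ∀ t ∈ Set.Ioc (0:ℝ) R,
        |v t| ≤ (Real.log (Real.tanh (R / 2) / Real.tanh (t / 2))) ^ ((p - 1) / p) *
            (∫ s in Set.Ioo (0:ℝ) R,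
              |iteratedDerivWithin k v (Set.Ioc 0 R) s| ^ p * Real.sinh s ^ (N - 1)) ^ (1 / p)
            / (Nat.factorial (k - 1) : ℝ)
          + C * (∑ j ∈ Finset.range (k + 1),
              ∫ s in Set.Ioo (0:ℝ) R,
                |iteratedDerivWithin j v (Set.Ioc 0 R) s| ^ p * Real.sinh s ^ (N - 1)) ^ (1 / p) := by
  have hp0 : (0:ℝ) < p := lt_trans one_pos hp
  set q : ℝ := p / (p - 1) with hq
  have hpq : p.HolderConjugate q := Real.HolderConjugate.conjExponent hp
  have hq0 : 0 < q := hpq.symm.pos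
  have hk1 : (1:ℝ) ≤ (k:ℝ) := by exact_mod_cast hk
  have hNgt : (1:ℝ) < (N:ℝ) := by rw [hN]; nlinarith
  have hN1 : 1 ≤ N := by exact_mod_cast (le_of_lt (by exact_mod_cast hNgt : (1:ℕ) < N))
  set W : ℝ → ℝ := fun y => Real.sinh y ^ (N - 1) with hWdef
  have hWpos : ∀ y : ℝ, 0 < y → 0 < W y := fun y hy =>
    pow_pos (Real.sinh_pos_iff.mpr hy) _
  have hWcont : Continuous W := Real.continuous_sinh.pow _
  set D : ℝ := (∫ y in Ioo (R/2) R, ((1:ℝ) * W y ^ (-(1/p))) ^ q) ^ (1/q) with hD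
  have hD0 : 0 ≤ D := by
    apply Real.rpow_nonneg
    apply setIntegral_nonneg measurableSet_Ioo
    intro y hy
    have : 0 < y := lt_trans (by linarith) hy.1
    exact Real.rpow_nonneg (by positivity) _
  set sumCoef : ℝ := ∑ j ∈ Finset.range k, ((j.factorial : ℝ))⁻¹ * R ^ j * (2/R + 1)
    with hsumCoef
  have hterm0 : ∀ j ∈ Finset.range k, (0:ℝ) ≤ ((j.factorial : ℝ))⁻¹ * R ^ j * (2/R + 1) := by
    intro j _
    have : (0:ℝ) < (j.factorial : ℝ) := by exact_mod_cast j.factorial_pos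
    positivity
  have hsum0 : 0 ≤ sumCoef := Finset.sum_nonneg hterm0
  have hsum_ge : 2/R + 1 ≤ sumCoef := by
    have := Finset.single_le_sum hterm0 (Finset.mem_range.mpr hk)
    simpa using this
  refine ⟨sumCoef * D + 1, by positivity, ?_⟩
  intro v hv hint t ht
  set I : Set ℝ := Set.Ioc 0 R with hI
  set f : ℕ → ℝ → ℝ := fun j => iteratedDerivWithin j v I with hf
  set S : ℝ := ∑ j ∈ Finset.range (k+1), ∫ s in Ioo (0:ℝ) R, |f j s| ^ p * W s with hS
  have hUD : UniqueDiffOn ℝ I := uniqueDiffOn_Ioc 0 R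
  have hcont : ∀ j : ℕ, j ≤ k → ContinuousOn (f j) I := fun j hj =>
    hv.continuousOn_iteratedDerivWithin (by exact_mod_cast hj) hUD
  have hdiffOn : ∀ j : ℕ, j < k → DifferentiableOn ℝ (f j) I := fun j hj =>
    hv.differentiableOn_iteratedDerivWithin (by exact_mod_cast hj) hUD
  have hDeriv : ∀ j : ℕ, j < k → ∀ y : ℝ, 0 < y → y < R → HasDerivAt (f j) (f (j+1) y) y := by
    intro j hj y hy hyR
    have hyI : y ∈ I := ⟨hy, hyR.le⟩
    have h1 := ((hdiffOn j hj y hyI).hasDerivWithinAt).hasDerivAt (Ioc_mem_nhds hy hyR)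
    have h2 : f (j+1) y = derivWithin (f j) I y := congrFun iteratedDerivWithin_succ y
    rw [hf] at h2 ⊢
    rw [h2]
    exact h1
  have hTnonneg : ∀ j : ℕ, 0 ≤ ∫ s in Ioo (0:ℝ) R, |f j s| ^ p * W s := fun j =>
    setIntegral_nonneg measurableSet_Ioo fun y hy =>
      mul_nonneg (Real.rpow_nonneg (abs_nonneg _) _) (hWpos y hy.1).le
  have hS0 : 0 ≤ S := Finset.sum_nonneg fun i _ => hTnonneg i
  have hTleS : ∀ j : ℕ, j ≤ k → (∫ s in Ioo (0:ℝ) R, |f j s| ^ p * W s) ≤ S := fun j hj =>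
    Finset.single_le_sum (fun i _ => hTnonneg i) (Finset.mem_range.mpr (Nat.lt_succ_of_le hj))
  have hSp0 : 0 ≤ S ^ (1/p) := Real.rpow_nonneg hS0 _
  -- generic Hölder step
  have hWexp : ∀ {r : ℝ} (t0 : ℝ), 0 < t0 → ContinuousOn (fun y => W y ^ r) (Icc t0 R) := by
    intro r t0 ht0
    apply hWcont.continuousOn.rpow_const
    intro y hy
    exact Or.inl (hWpos y (lt_of_lt_of_le ht0 hy.1)).ne'
  have hHolder : ∀ j : ℕ, j ≤ k → ∀ t0 : ℝ, 0 < t0 → t0 < R → ∀ G : ℝ → ℝ,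
      ContinuousOn G (Icc t0 R) → (∀ y ∈ Icc t0 R, 0 ≤ G y) →
      (∫ y in Ioo t0 R, |f j y| * G y) ≤
        (∫ y in Ioo t0 R, |f j y| ^ p * W y) ^ (1/p) *
          (∫ y in Ioo t0 R, (G y * W y ^ (-(1/p))) ^ q) ^ (1/q) := by
    intro j hj t0 ht0 ht0R G hGc hG0
    have hsub : Ioo t0 R ⊆ I := fun y hy => ⟨lt_trans ht0 hy.1, hy.2.le⟩
    have hsubI : Icc t0 R ⊆ I := fun y hy => ⟨lt_of_lt_of_le ht0 hy.1, hy.2⟩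
    have hfc : ContinuousOn (fun y => |f j y|) (Icc t0 R) := ((hcont j hj).mono hsubI).abs
    set F1 : ℝ → ℝ := fun y => |f j y| * W y ^ (1/p) with hF1
    set G1 : ℝ → ℝ := fun y => G y * W y ^ (-(1/p)) with hG1
    have hF1c : ContinuousOn F1 (Icc t0 R) := hfc.mul (hWexp t0 ht0)
    have hG1c : ContinuousOn G1 (Icc t0 R) := hGc.mul (hWexp t0 ht0)
    have haeF : (fun y => F1 y ^ p) =ᵐ[volume.restrict (Ioo t0 R)]
        (fun y => |f j y| ^ p * W y) := by
      rw [Filter.EventuallyEq, ae_restrict_iff' measurableSet_Ioo]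
      apply Filter.Eventually.of_forall
      intro y hy
      have hy0 : 0 < y := lt_trans ht0 hy.1
      rw [hF1, Real.mul_rpow (abs_nonneg _) (Real.rpow_nonneg (hWpos y hy0).le _),
        ← Real.rpow_mul (hWpos y hy0).le, one_div_mul_cancel hp0.ne', Real.rpow_one]
    have hFp : IntegrableOn (fun y => F1 y ^ p) (Ioo t0 R) := by
      exact ((hint j hj).mono_set (Ioo_subset_Ioo_left ht0.le)).congr haeF.symm
    have hGq : IntegrableOn (fun y => G1 y ^ q) (Ioo t0 R) := by
      apply ((ContinuousOn.integrableOn_compact isCompact_Icc ?_).mono_set Ioo_subset_Icc_self)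
      exact hG1c.rpow_const fun y hy => Or.inr hq0.le
    have hmain := holder_aux hpq F1 G1
      ((ae_restrict_iff' measurableSet_Ioo).mpr (Filter.Eventually.of_forall fun y hy =>
        mul_nonneg (abs_nonneg _)
          (Real.rpow_nonneg (hWpos y (lt_trans ht0 hy.1)).le _)))
      ((ae_restrict_iff' measurableSet_Ioo).mpr (Filter.Eventually.of_forall fun y hy =>
        mul_nonneg (hG0 y (Ioo_subset_Icc_self hy))
          (Real.rpow_nonneg (hWpos y (lt_trans ht0 hy.1)).le _)))
      ((hF1c.mono Ioo_subset_Icc_self).aestronglyMeasurable measurableSet_Ioo)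
      ((hG1c.mono Ioo_subset_Icc_self).aestronglyMeasurable measurableSet_Ioo)
      hFp hGq
    have heq : (∫ y in Ioo t0 R, F1 y * G1 y) = ∫ y in Ioo t0 R, |f j y| * G y := by
      apply setIntegral_congr_fun measurableSet_Ioo
      intro y hy
      have hy0 : 0 < y := lt_trans ht0 hy.1
      have hone : W y ^ (1/p) * W y ^ (-(1/p)) = 1 := by
        rw [← Real.rpow_add (hWpos y hy0)]
        simp
      calc F1 y * G1 y = |f j y| * G y * (W y ^ (1/p) * W y ^ (-(1/p))) := by
            rw [hF1, hG1]; ring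
        _ = |f j y| * G y := by rw [hone, mul_one]
    rw [heq] at hmain
    rwa [integral_congr_ae haeF] at hmain
  -- boundary estimates
  have hMle : ∀ j : ℕ, j ≤ k → (∫ y in Ioo (R/2) R, |f j y|) ≤ S ^ (1/p) * D := by
    intro j hj
    have h2R : 0 < R/2 := by linarith
    have h2R' : R/2 < R := by linarith
    have h := hHolder j hj (R/2) h2R h2R' (fun _ => 1) continuousOn_const
      (fun y _ => zero_le_one)
    simp only [mul_one] at h
    calc (∫ y in Ioo (R/2) R, |f j y|) ≤
        (∫ y in Ioo (R/2) R, |f j y| ^ p * W y) ^ (1/p) *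
          (∫ y in Ioo (R/2) R, ((1:ℝ) * W y ^ (-(1/p))) ^ q) ^ (1/q) := h
      _ ≤ S ^ (1/p) * D := by
          rw [hD]
          apply mul_le_mul_of_nonneg_right _ (Real.rpow_nonneg ?_ _)
          · apply Real.rpow_le_rpow (setIntegral_nonneg measurableSet_Ioo fun y hy =>
              mul_nonneg (Real.rpow_nonneg (abs_nonneg _) _) (hWpos y (lt_trans h2R hy.1)).le)
              _ (one_div_nonneg.mpr hp0.le)
            refine le_trans ?_ (hTleS j hj)
            apply setIntegral_mono_set (hint j hj)
            · exact (ae_restrict_iff' measurableSet_Ioo).mpr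
                (Filter.Eventually.of_forall fun y hy =>
                  mul_nonneg (Real.rpow_nonneg (abs_nonneg _) _) (hWpos y hy.1).le)
            · exact HasSubset.Subset.eventuallyLE (Ioo_subset_Ioo_left h2R.le)
          · apply setIntegral_nonneg measurableSet_Ioo
            intro y hy
            exact Real.rpow_nonneg (by
              have : 0 < y := lt_trans h2R hy.1
              positivity) _
  have hfR : ∀ j : ℕ, j < k → |f j R| ≤ (2/R + 1) * (S ^ (1/p) * D) := by
    intro j hj
    have h2R : 0 < R/2 := by linarith
    have h2R' : R/2 < R := by linarith
    have hIccsub : Icc (R/2) R ⊆ I := fun y hy => ⟨lt_of_lt_of_le h2R hy.1, hy.2⟩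
    have hb := boundary_aux h2R'
      ((hcont j hj.le).mono hIccsub) ((hcont (j+1) hj).mono hIccsub)
      (fun y hy => hDeriv j hj y (lt_trans h2R hy.1) hy.2)
    have e1 := hMle j hj.le
    have e2 := hMle (j+1) hj
    have hR2 : R - R/2 = R/2 := by ring
    rw [hR2] at hb
    have e2' := mul_le_mul_of_nonneg_right e2 h2R.le
    have hSD : 0 ≤ S ^ (1/p) * D := mul_nonneg hSp0 hD0
    rw [← mul_le_mul_iff_of_pos_right h2R]
    have hc : (2/R + 1) * (S ^ (1/p) * D) * (R/2) =
        S ^ (1/p) * D + S ^ (1/p) * D * (R/2) := by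
      field_simp
    rw [hc]
    linarith [hb, e1, e2']
  have htanhR : (0:ℝ) < Real.tanh (R/2) := by
    rw [Real.tanh_eq_sinh_div_cosh]
    have h1 : 0 < Real.sinh (R/2) := Real.sinh_pos_iff.mpr (by linarith)
    have h2 : 0 < Real.cosh (R/2) := Real.cosh_pos _
    positivity
  rcases eq_or_lt_of_le ht.2 with hteq | htR
  · -- case t = R
    rw [hteq, div_self htanhR.ne', Real.log_one,
      Real.zero_rpow (ne_of_gt (div_pos (by linarith) hp0)), zero_mul, zero_div, zero_add]
    have h0 : |v R| = |f 0 R| := by rw [hf]; simp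
    rw [h0]
    calc |f 0 R| ≤ (2/R + 1) * (S ^ (1/p) * D) := hfR 0 hk
      _ ≤ sumCoef * (S ^ (1/p) * D) :=
          mul_le_mul_of_nonneg_right hsum_ge (mul_nonneg hSp0 hD0)
      _ = sumCoef * D * S ^ (1/p) := by ring
      _ ≤ (sumCoef * D + 1) * S ^ (1/p) := by nlinarith [hSp0]
  · -- case t < R
    have ht0 : 0 < t := ht.1
    have hIccI : Icc t R ⊆ I := fun y hy => ⟨lt_of_lt_of_le ht0 hy.1, hy.2⟩
    have hIcc_eq : ∀ (j : ℕ) (y : ℝ), y ∈ Ioo t R →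
        iteratedDerivWithin j v (Icc t R) y = f j y := by
      intro j y hy
      rw [hf]
      apply iterDW_congr_set
      apply Filter.eventuallyEq_set.mpr
      filter_upwards [Ioo_mem_nhds hy.1 hy.2] with z hz
      simp only [mem_Icc, mem_Ioc]
      exact iff_of_true ⟨hz.1.le, hz.2.le⟩ ⟨lt_trans ht0 hz.1, hz.2.le⟩
    have hatR : ∀ j : ℕ, iteratedDerivWithin j v (Icc t R) R = f j R := by
      intro j
      rw [hf]
      apply iterDW_congr_set
      apply Filter.eventuallyEq_set.mpr
      filter_upwards [Ioi_mem_nhds htR] with z hz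
      simp only [mem_Icc, mem_Ioc]
      constructor
      · rintro ⟨h1, h2⟩; exact ⟨lt_trans ht0 hz, h2⟩
      · rintro ⟨h1, h2⟩; exact ⟨le_of_lt hz, h2⟩
    set m : ℕ := k - 1 with hm
    have hm1 : m + 1 = k := Nat.succ_pred_eq_of_pos hk
    have hvIcc : ContDiffOn ℝ k v (Icc t R) := hv.mono hIccI
    have hUDtc : UniqueDiffOn ℝ (Icc t R) := uniqueDiffOn_Icc htR
    have hvm : ContDiffOn ℝ m v (Icc t R) := hvIcc.of_le (by exact_mod_cast Nat.sub_le k 1)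
    have hdm : DifferentiableOn ℝ (iteratedDerivWithin m v (Icc t R)) (Icc t R) := by
      apply hvIcc.differentiableOn_iteratedDerivWithin _ hUDtc
      exact_mod_cast Nat.pred_lt hk.ne'
    have hcint : ContinuousOn (iteratedDerivWithin (m+1) v (Icc t R)) (Icc t R) :=
      hvIcc.continuousOn_iteratedDerivWithin (by exact_mod_cast hm1.le) hUDtc
    have hintg : IntervalIntegrable
        (fun y => ((m.factorial : ℝ)⁻¹ * (t - y) ^ m) • iteratedDerivWithin (m+1) v (Icc t R) y)
        volume t R := by
      apply ContinuousOn.intervalIntegrable_of_Icc htR.le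
      exact (continuousOn_const.mul
        (((continuous_const.sub continuous_id).pow m).continuousOn)).smul hcint
    have hFTC := intervalIntegral.integral_eq_sub_of_hasDeriv_right_of_le
      (f := fun y => taylorWithinEval v m (Icc t R) y t)
      (f' := fun y => ((m.factorial : ℝ)⁻¹ * (t - y) ^ m) •
        iteratedDerivWithin (m+1) v (Icc t R) y)
      htR.le
      (continuousOn_taylorWithinEval hUDtc hvm)
      (fun y hy => (((hasDerivWithinAt_taylorWithinEval_at_Icc t htR
        (Ioo_subset_Icc_self hy) hvm hdm).hasDerivAt
          (Icc_mem_nhds hy.1 hy.2)).hasDerivWithinAt))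
      hintg
    beta_reduce at hFTC
    rw [taylorWithinEval_self] at hFTC
    have hvt : v t = taylorWithinEval v m (Icc t R) R t -
        ∫ y in t..R, ((m.factorial : ℝ)⁻¹ * (t - y) ^ m) •
          iteratedDerivWithin (m+1) v (Icc t R) y := by
      rw [hFTC]; ring
    have hb1 : |v t| ≤ |taylorWithinEval v m (Icc t R) R t| +
        |∫ y in t..R, ((m.factorial : ℝ)⁻¹ * (t - y) ^ m) •
          iteratedDerivWithin (m+1) v (Icc t R) y| := by
      rw [hvt]; exact abs_sub _ _
    -- Taylor boundary term
    have hTay : |taylorWithinEval v m (Icc t R) R t| ≤ sumCoef * (S ^ (1/p) * D) := by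
      rw [taylor_within_apply]
      have hterm : ∀ j ∈ Finset.range (m+1),
          |((j.factorial : ℝ)⁻¹ * (t - R) ^ j) • iteratedDerivWithin j v (Icc t R) R|
            ≤ (j.factorial : ℝ)⁻¹ * R ^ j * (2/R + 1) * (S ^ (1/p) * D) := by
        intro j hjm
        have hjk : j < k := by
          have := Finset.mem_range.mp hjm; omega
        rw [hatR j, smul_eq_mul, abs_mul, abs_mul, abs_pow,
          abs_of_nonneg (by positivity : (0:ℝ) ≤ ((j.factorial : ℝ))⁻¹)]
        have h2 : |t - R| ^ j ≤ R ^ j := by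
          apply pow_le_pow_left₀ (abs_nonneg _)
          rw [abs_sub_comm, abs_of_nonneg (by linarith : (0:ℝ) ≤ R - t)]
          linarith
        have h3 := hfR j hjk
        calc (j.factorial:ℝ)⁻¹ * |t - R| ^ j * |f j R|
            ≤ (j.factorial:ℝ)⁻¹ * R ^ j * ((2/R + 1) * (S ^ (1/p) * D)) := by
              apply mul_le_mul (mul_le_mul le_rfl h2 (by positivity)
                  (by positivity)) h3 (abs_nonneg _)
                (mul_nonneg (by positivity) (pow_nonneg hR.le j))
          _ = (j.factorial : ℝ)⁻¹ * R ^ j * (2/R + 1) * (S ^ (1/p) * D) := by ring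
      calc |∑ j ∈ Finset.range (m+1),
              ((j.factorial : ℝ)⁻¹ * (t - R) ^ j) • iteratedDerivWithin j v (Icc t R) R|
          ≤ ∑ j ∈ Finset.range (m+1),
              |((j.factorial : ℝ)⁻¹ * (t - R) ^ j) • iteratedDerivWithin j v (Icc t R) R| :=
            Finset.abs_sum_le_sum_abs _ _
        _ ≤ ∑ j ∈ Finset.range (m+1),
              (j.factorial : ℝ)⁻¹ * R ^ j * (2/R + 1) * (S ^ (1/p) * D) :=
            Finset.sum_le_sum hterm
        _ = sumCoef * (S ^ (1/p) * D) := by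
            rw [hm1, hsumCoef, Finset.sum_mul]
    -- exponent key inequality
    have hkey : ∀ y ∈ Ioo t R, ((y - t)^m * W y ^ (-(1/p))) ^ q ≤ (Real.sinh y)⁻¹ := by
      intro y hy
      have hy0 : 0 < y := lt_trans ht0 hy.1
      have hs : 0 < Real.sinh y := Real.sinh_pos_iff.mpr hy0
      have hWy : 0 < W y := hWpos y hy0
      have hyt : (0:ℝ) ≤ y - t := by linarith [hy.1]
      have h2 : (y - t) ^ m ≤ Real.sinh y ^ m := by
        apply pow_le_pow_left₀ hyt
        have := (Real.self_lt_sinh_iff).mpr hy0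
        linarith
      have hWr : (0:ℝ) ≤ W y ^ (-(1/p)) := Real.rpow_nonneg hWy.le _
      have hexp : ((m:ℝ) + ((N-1:ℕ):ℝ) * (-(1/p))) * q = -1 := by
        have hc1 : ((N-1:ℕ):ℝ) = (N:ℝ) - 1 := by
          rw [Nat.cast_sub hN1]; norm_num
        have hc2 : ((m:ℕ):ℝ) = (k:ℝ) - 1 := by
          have hkk : 1 ≤ k := hk
          rw [hm, Nat.cast_sub hkk]; norm_num
        have hne : p - 1 ≠ 0 := by linarith
        rw [hc1, hc2, hN, hq]
        field_simp
        ring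
      calc ((y - t)^m * W y ^ (-(1/p))) ^ q
          ≤ (Real.sinh y ^ m * W y ^ (-(1/p))) ^ q :=
            Real.rpow_le_rpow (mul_nonneg (pow_nonneg hyt m) hWr)
              (mul_le_mul_of_nonneg_right h2 hWr) hq0.le
        _ = (Real.sinh y)⁻¹ := by
            simp only [hWdef]
            rw [← Real.rpow_natCast (Real.sinh y) m, ← Real.rpow_natCast (Real.sinh y) (N-1),
              ← Real.rpow_mul hs.le, ← Real.rpow_add hs, ← Real.rpow_mul hs.le,
              hexp, Real.rpow_neg_one]
    have hL0 : 0 ≤ ∫ y in Ioo t R, (Real.sinh y)⁻¹ :=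
      setIntegral_nonneg measurableSet_Ioo fun y hy =>
        inv_nonneg.mpr (Real.sinh_pos_iff.mpr (lt_trans ht0 hy.1)).le
    have hGq0 : 0 ≤ ∫ y in Ioo t R, ((y - t)^m * W y ^ (-(1/p))) ^ q :=
      setIntegral_nonneg measurableSet_Ioo fun y hy =>
        Real.rpow_nonneg (mul_nonneg (pow_nonneg (by linarith [hy.1]) m)
          (Real.rpow_nonneg (hWpos y (lt_trans ht0 hy.1)).le _)) _
    have hGq_le : (∫ y in Ioo t R, ((y - t)^m * W y ^ (-(1/p))) ^ q)
        ≤ ∫ y in Ioo t R, (Real.sinh y)⁻¹ := by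
      apply setIntegral_mono_on
      · apply (ContinuousOn.integrableOn_compact isCompact_Icc ?_).mono_set Ioo_subset_Icc_self
        apply ContinuousOn.rpow_const
        · exact (((continuous_id.sub continuous_const).pow m).continuousOn).mul (hWexp t ht0)
        · exact fun y hy => Or.inr hq0.le
      · apply (ContinuousOn.integrableOn_compact isCompact_Icc ?_).mono_set Ioo_subset_Icc_self
        apply ContinuousOn.inv₀ Real.continuous_sinh.continuousOn
        exact fun y hy => (Real.sinh_pos_iff.mpr (lt_of_lt_of_le ht0 hy.1)).ne'
      · exact measurableSet_Ioo
      · exact hkey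
    have hTk_le : (∫ y in Ioo t R, |f (m+1) y| ^ p * W y) ^ (1/p)
        ≤ (∫ s in Ioo (0:ℝ) R, |f k s| ^ p * W s) ^ (1/p) := by
      rw [hm1]
      apply Real.rpow_le_rpow (setIntegral_nonneg measurableSet_Ioo fun y hy =>
        mul_nonneg (Real.rpow_nonneg (abs_nonneg _) _) (hWpos y (lt_trans ht0 hy.1)).le)
        _ (one_div_nonneg.mpr hp0.le)
      apply setIntegral_mono_set (hint k le_rfl)
      · exact (ae_restrict_iff' measurableSet_Ioo).mpr (Filter.Eventually.of_forall fun y hy =>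
          mul_nonneg (Real.rpow_nonneg (abs_nonneg _) _) (hWpos y hy.1).le)
      · exact HasSubset.Subset.eventuallyLE (Ioo_subset_Ioo_left ht0.le)
    have hhold := hHolder (m+1) hm1.le t ht0 htR (fun y => (y - t)^m)
      (((continuous_id.sub continuous_const).pow m).continuousOn)
      (fun y hy => pow_nonneg (by linarith [hy.1] : (0:ℝ) ≤ y - t) m)
    beta_reduce at hhold
    have hfinal : (∫ y in Ioo t R, |f (m+1) y| * (y - t) ^ m)
        ≤ (∫ s in Ioo (0:ℝ) R, |f k s| ^ p * W s) ^ (1/p) *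
          (∫ y in Ioo t R, (Real.sinh y)⁻¹) ^ (1/q) := by
      have hTk0 : (0:ℝ) ≤ (∫ s in Ioo (0:ℝ) R, |f k s| ^ p * W s) ^ (1/p) :=
        Real.rpow_nonneg (setIntegral_nonneg measurableSet_Ioo fun y hy =>
          mul_nonneg (Real.rpow_nonneg (abs_nonneg _) _) (hWpos y hy.1).le) _
      calc (∫ y in Ioo t R, |f (m+1) y| * (y - t) ^ m)
          ≤ (∫ y in Ioo t R, |f (m+1) y| ^ p * W y) ^ (1/p) *
            (∫ y in Ioo t R, ((y - t)^m * W y ^ (-(1/p))) ^ q) ^ (1/q) := hhold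
        _ ≤ (∫ s in Ioo (0:ℝ) R, |f k s| ^ p * W s) ^ (1/p) *
            (∫ y in Ioo t R, (Real.sinh y)⁻¹) ^ (1/q) :=
          mul_le_mul hTk_le
            (Real.rpow_le_rpow hGq0 hGq_le (one_div_nonneg.mpr hq0.le))
            (Real.rpow_nonneg hGq0 _) hTk0
    have hrem : |∫ y in t..R, ((m.factorial : ℝ)⁻¹ * (t - y) ^ m) •
          iteratedDerivWithin (m+1) v (Icc t R) y| ≤
        (m.factorial : ℝ)⁻¹ * ((∫ s in Ioo (0:ℝ) R, |f k s| ^ p * W s) ^ (1/p) *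
          (∫ y in Ioo t R, (Real.sinh y)⁻¹) ^ (1/q)) := by
      rw [intervalIntegral.integral_of_le htR.le,
        MeasureTheory.integral_Ioc_eq_integral_Ioo]
      have hstep1 : ∀ y ∈ Ioo t R,
          |((m.factorial : ℝ)⁻¹ * (t - y) ^ m) • iteratedDerivWithin (m+1) v (Icc t R) y|
            = (m.factorial : ℝ)⁻¹ * (|f (m+1) y| * (y - t) ^ m) := by
        intro y hy
        rw [hIcc_eq (m+1) y hy, smul_eq_mul, abs_mul, abs_mul, abs_pow, abs_sub_comm,
          abs_of_nonneg (by positivity : (0:ℝ) ≤ ((m.factorial : ℝ))⁻¹),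
          abs_of_nonneg (by linarith [hy.1] : (0:ℝ) ≤ y - t)]
        ring
      calc |∫ y in Ioo t R, ((m.factorial : ℝ)⁻¹ * (t - y) ^ m) •
              iteratedDerivWithin (m+1) v (Icc t R) y|
          ≤ ∫ y in Ioo t R, |((m.factorial : ℝ)⁻¹ * (t - y) ^ m) •
              iteratedDerivWithin (m+1) v (Icc t R) y| := by
            simpa only [Real.norm_eq_abs, smul_eq_mul] using
              MeasureTheory.norm_integral_le_integral_norm
              (μ := volume.restrict (Ioo t R))
              (fun y => ((m.factorial : ℝ)⁻¹ * (t - y) ^ m) •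
                iteratedDerivWithin (m+1) v (Icc t R) y)
        _ = ∫ y in Ioo t R, (m.factorial : ℝ)⁻¹ * (|f (m+1) y| * (y - t) ^ m) :=
            setIntegral_congr_fun measurableSet_Ioo hstep1
        _ = (m.factorial : ℝ)⁻¹ * ∫ y in Ioo t R, |f (m+1) y| * (y - t) ^ m :=
            integral_const_mul _ _
        _ ≤ (m.factorial : ℝ)⁻¹ * ((∫ s in Ioo (0:ℝ) R, |f k s| ^ p * W s) ^ (1/p) *
              (∫ y in Ioo t R, (Real.sinh y)⁻¹) ^ (1/q)) := by
            apply mul_le_mul_of_nonneg_left hfinal (by positivity)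
    -- assemble
    have hL := integral_inv_sinh ht0 htR.le
    have hq_exp : (p - 1) / p = 1 / q := by
      rw [hq, one_div_div]
    rw [hq_exp, ← hL]
    have h1 : sumCoef * (S ^ (1/p) * D) ≤ (sumCoef * D + 1) * S ^ (1/p) := by
      nlinarith [hSp0]
    have h2 : (m.factorial : ℝ)⁻¹ * ((∫ s in Ioo (0:ℝ) R, |f k s| ^ p * W s) ^ (1/p) *
          (∫ y in Ioo t R, (Real.sinh y)⁻¹) ^ (1/q)) =
        (∫ y in Ioo t R, (Real.sinh y)⁻¹) ^ (1/q) *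
          (∫ s in Ioo (0:ℝ) R, |f k s| ^ p * W s) ^ (1/p) / (m.factorial : ℝ) := by
      rw [div_eq_mul_inv]; ring
    calc |v t| ≤ |taylorWithinEval v m (Icc t R) R t| +
          |∫ y in t..R, ((m.factorial : ℝ)⁻¹ * (t - y) ^ m) •
            iteratedDerivWithin (m+1) v (Icc t R) y| := hb1
      _ ≤ sumCoef * (S ^ (1/p) * D) +
          (m.factorial : ℝ)⁻¹ * ((∫ s in Ioo (0:ℝ) R, |f k s| ^ p * W s) ^ (1/p) *
            (∫ y in Ioo t R, (Real.sinh y)⁻¹) ^ (1/q)) := add_le_add hTay hrem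
      _ ≤ (∫ y in Ioo t R, (Real.sinh y)⁻¹) ^ (1/q) *
            (∫ s in Ioo (0:ℝ) R, |f k s| ^ p * W s) ^ (1/p) / (m.factorial : ℝ) +
          (sumCoef * D + 1) * S ^ (1/p) := by
          rw [← h2]
          linarith [h1]

end Main
end

section
/- Let k = 1, p > 1, N = p, R > 0. If v : (0, R] → ℝ is continuously differentiable with v(R) = 0 and ∫₀^R |v'(s)|^p sinh^{N−1}(s) ds finite, then for all t ∈ (0, R]: |v(t)| ≤ (log( tanh(R/2) / tanh(t/2) ))^{(p−1)/p} · ( ∫₀^R |v'(s)|^p sinh^{N−1}(s) ds )^{1/p}. -/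
open MeasureTheory

lemma aux_memLp14 {f : ℝ → ℝ} {a b : ℝ} (hf : ContinuousOn f (Set.Icc a b)) (q : ENNReal) :
    MemLp f q (volume.restrict (Set.Ioc a b)) := by
  obtain ⟨C, hC⟩ := isCompact_Icc.exists_bound_of_continuousOn hf
  haveI : IsFiniteMeasure (volume.restrict (Set.Ioc a b)) := by
    constructor
    rw [Measure.restrict_apply_univ, Real.volume_Ioc]
    exact ENNReal.ofReal_lt_top
  refine MemLp.of_bound
    ((hf.mono Set.Ioc_subset_Icc_self).aestronglyMeasurable measurableSet_Ioc) C ?_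
  filter_upwards [ae_restrict_mem measurableSet_Ioc] with x hx
  exact hC x (Set.Ioc_subset_Icc_self hx)

lemma sinh_inv_integral14 {t R : ℝ} (ht : 0 < t) (htR : t ≤ R) :
    ∫ s in Set.Ioc t R, (Real.sinh s)⁻¹ =
      Real.log (Real.tanh (R/2) / Real.tanh (t/2)) := by
  have key : ∀ x ∈ Set.uIcc t R,
      HasDerivAt (fun s => Real.log (Real.sinh (s/2)) - Real.log (Real.cosh (s/2)))
        (Real.sinh x)⁻¹ x := by
    intro x hx
    rw [Set.uIcc_of_le htR] at hx
    have hx0 : 0 < x / 2 := by linarith [hx.1]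
    have hs : 0 < Real.sinh (x/2) := Real.sinh_pos_iff.mpr hx0
    have hc : 0 < Real.cosh (x/2) := Real.cosh_pos _
    have h1 : HasDerivAt (fun s : ℝ => s/2) (1/2) x := by
      simpa using (hasDerivAt_id x).div_const 2
    have h2 : HasDerivAt (fun s => Real.sinh (s/2)) (Real.cosh (x/2) * (1/2)) x := by
      have := (Real.hasDerivAt_sinh (x/2)).comp x h1; exact this
    have h3 : HasDerivAt (fun s => Real.cosh (s/2)) (Real.sinh (x/2) * (1/2)) x := by
      have := (Real.hasDerivAt_cosh (x/2)).comp x h1; exact this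
    have h4 := (Real.hasDerivAt_log hs.ne').comp x h2
    have h5 := (Real.hasDerivAt_log hc.ne').comp x h3
    have := h4.sub h5
    refine this.congr_deriv (Eq.symm ?_)
    have hsx := Real.sinh_two_mul (x/2)
    rw [show 2*(x/2) = x by ring] at hsx
    have hid : Real.cosh (x/2) ^ 2 - Real.sinh (x/2) ^ 2 = 1 :=
      Real.cosh_sq_sub_sinh_sq _
    rw [hsx]
    field_simp
    linear_combination (-1:ℝ) * hid
  have hcontInt : IntervalIntegrable (fun s => (Real.sinh s)⁻¹) volume t R := by
    apply ContinuousOn.intervalIntegrable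
    rw [Set.uIcc_of_le htR]
    exact Real.continuous_sinh.continuousOn.inv₀ fun x hx =>
      (Real.sinh_pos_iff.mpr (lt_of_lt_of_le ht hx.1)).ne'
  have hFTC := intervalIntegral.integral_eq_sub_of_hasDerivAt key hcontInt
  rw [← intervalIntegral.integral_of_le htR, hFTC]
  have ltanh : ∀ x : ℝ, 0 < x →
      Real.log (Real.tanh x) = Real.log (Real.sinh x) - Real.log (Real.cosh x) := by
    intro x hx
    rw [Real.tanh_eq_sinh_div_cosh,
      Real.log_div (Real.sinh_pos_iff.mpr hx).ne' (Real.cosh_pos x).ne']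
  have htpos : ∀ x : ℝ, 0 < x → 0 < Real.tanh x := by
    intro x hx
    rw [Real.tanh_eq_sinh_div_cosh]
    exact div_pos (Real.sinh_pos_iff.mpr hx) (Real.cosh_pos x)
  rw [Real.log_div (htpos _ (by linarith)).ne' (htpos _ (by linarith)).ne',
    ltanh _ (by linarith), ltanh _ (by linarith)]

theorem stmt14 (p R : ℝ) (hp : 1 < p) (hR : 0 < R) (v v' : ℝ → ℝ)
    (hderiv : ∀ t ∈ Set.Ioc (0:ℝ) R, HasDerivWithinAt v (v' t) (Set.Ioc 0 R) t)
    (hcont : ContinuousOn v' (Set.Ioc 0 R))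
    (hvR : v R = 0)
    (hint : IntegrableOn (fun s => |v' s| ^ p * Real.sinh s ^ (p - 1)) (Set.Ioo 0 R)) :
    ∀ t ∈ Set.Ioc (0:ℝ) R,
      |v t| ≤ (Real.log (Real.tanh (R / 2) / Real.tanh (t / 2))) ^ ((p - 1) / p) *
        (∫ s in Set.Ioo (0:ℝ) R, |v' s| ^ p * Real.sinh s ^ (p - 1)) ^ (1 / p) := by
  rintro t ⟨ht0, htR⟩
  have hp0 : (0:ℝ) < p := by linarith
  have hp1 : (0:ℝ) < p - 1 := by linarith
  set c : ℝ := (p - 1) / p with hcdef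
  have hc0 : 0 ≤ c := by positivity
  have hsub : Set.Icc t R ⊆ Set.Ioc 0 R := fun x hx => ⟨lt_of_lt_of_le ht0 hx.1, hx.2⟩
  have hsinhpos : ∀ x ∈ Set.Icc t R, 0 < Real.sinh x := fun x hx =>
    Real.sinh_pos_iff.mpr (lt_of_lt_of_le ht0 hx.1)
  -- FTC : |v t| ≤ ∫ |v'|
  have hvc : ContinuousOn v (Set.Icc t R) := fun x hx =>
    ((hderiv x (hsub hx)).continuousWithinAt).mono hsub
  have hv'i : IntervalIntegrable v' volume t R := by
    apply ContinuousOn.intervalIntegrable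
    rw [Set.uIcc_of_le htR]
    exact hcont.mono hsub
  have hFTC : ∫ s in t..R, v' s = v R - v t := by
    apply intervalIntegral.integral_eq_sub_of_hasDeriv_right_of_le htR hvc ?_ hv'i
    intro x hx
    apply (hderiv x ⟨lt_trans ht0 hx.1, le_of_lt hx.2⟩).mono_of_mem_nhdsWithin
    apply mem_nhdsWithin.mpr
    exact ⟨Set.Ioo 0 R, isOpen_Ioo, ⟨lt_trans ht0 hx.1, hx.2⟩,
      fun y hy => ⟨hy.1.1, le_of_lt hy.1.2⟩⟩
  have habs : |v t| ≤ ∫ s in Set.Ioc t R, |v' s| := by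
    have h1 : |v t| = |∫ s in t..R, v' s| := by rw [hFTC, hvR, zero_sub, abs_neg]
    rw [h1, ← intervalIntegral.integral_of_le htR]
    exact intervalIntegral.abs_integral_le_integral_abs htR
  -- Hölder
  set μ := volume.restrict (Set.Ioc t R) with hμ
  have hpq : p.HolderConjugate (p / (p - 1)) := Real.HolderConjugate.conjExponent hp
  set q : ℝ := p / (p - 1) with hqdef
  set f : ℝ → ℝ := fun s => |v' s| * Real.sinh s ^ c with hfdef
  set g : ℝ → ℝ := fun s => Real.sinh s ^ (-c) with hgdef
  have hfc : ContinuousOn f (Set.Icc t R) :=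
    ((hcont.mono hsub).abs).mul
      (Real.continuous_sinh.continuousOn.rpow_const fun x _ => Or.inr hc0)
  have hgc : ContinuousOn g (Set.Icc t R) :=
    Real.continuous_sinh.continuousOn.rpow_const fun x hx => Or.inl (hsinhpos x hx).ne'
  have hfm : MemLp f (ENNReal.ofReal p) μ := aux_memLp14 hfc _
  have hgm : MemLp g (ENNReal.ofReal q) μ := aux_memLp14 hgc _
  have hfn : 0 ≤ᵐ[μ] f := by
    filter_upwards [ae_restrict_mem measurableSet_Ioc] with x hx
    exact mul_nonneg (abs_nonneg _)
      (Real.rpow_nonneg (hsinhpos x ⟨le_of_lt hx.1, hx.2⟩).le _)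
  have hgn : 0 ≤ᵐ[μ] g := by
    filter_upwards [ae_restrict_mem measurableSet_Ioc] with x hx
    exact Real.rpow_nonneg (hsinhpos x ⟨le_of_lt hx.1, hx.2⟩).le _
  have holder := integral_mul_le_Lp_mul_Lq_of_nonneg hpq hfn hgn hfm hgm
  -- rewrite the three integrals
  have e1 : ∫ a, f a * g a ∂μ = ∫ s in Set.Ioc t R, |v' s| := by
    apply setIntegral_congr_fun measurableSet_Ioc
    intro x hx
    have hsp := hsinhpos x ⟨le_of_lt hx.1, hx.2⟩
    simp only [hfdef, hgdef]
    rw [mul_assoc, ← Real.rpow_add hsp, add_neg_cancel, Real.rpow_zero, mul_one]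
  have e2 : ∫ a, f a ^ p ∂μ = ∫ s in Set.Ioc t R, |v' s| ^ p * Real.sinh s ^ (p - 1) := by
    apply setIntegral_congr_fun measurableSet_Ioc
    intro x hx
    have hsp := hsinhpos x ⟨le_of_lt hx.1, hx.2⟩
    show (|v' x| * Real.sinh x ^ c) ^ p = |v' x| ^ p * Real.sinh x ^ (p - 1)
    rw [Real.mul_rpow (abs_nonneg _) (Real.rpow_nonneg hsp.le _),
      ← Real.rpow_mul hsp.le]
    have hcp : c * p = p - 1 := by rw [hcdef]; field_simp
    rw [hcp]
  have e3 : ∫ a, g a ^ q ∂μ = ∫ s in Set.Ioc t R, (Real.sinh s)⁻¹ := by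
    apply setIntegral_congr_fun measurableSet_Ioc
    intro x hx
    have hsp := hsinhpos x ⟨le_of_lt hx.1, hx.2⟩
    show (Real.sinh x ^ (-c)) ^ q = (Real.sinh x)⁻¹
    rw [← Real.rpow_mul hsp.le]
    have : -c * q = -1 := by
      rw [hcdef, hqdef]; field_simp
    rw [this, Real.rpow_neg_one]
  have e4 : ∫ s in Set.Ioc t R, (Real.sinh s)⁻¹ =
      Real.log (Real.tanh (R/2) / Real.tanh (t/2)) := sinh_inv_integral14 ht0 htR
  have hq1 : 1 / q = (p - 1) / p := by rw [hqdef, one_div_div]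
  rw [e1, e2, e3, e4, hq1] at holder
  -- monotonicity of the integral
  have hintnonneg : (0:ℝ) ≤ ∫ s in Set.Ioc t R, |v' s| ^ p * Real.sinh s ^ (p - 1) := by
    apply setIntegral_nonneg measurableSet_Ioc
    intro x hx
    exact mul_nonneg (Real.rpow_nonneg (abs_nonneg _) _)
      (Real.rpow_nonneg (hsinhpos x ⟨le_of_lt hx.1, hx.2⟩).le _)
  have hmono : ∫ s in Set.Ioc t R, |v' s| ^ p * Real.sinh s ^ (p - 1) ≤
      ∫ s in Set.Ioo (0:ℝ) R, |v' s| ^ p * Real.sinh s ^ (p - 1) := by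
    rw [integral_Ioc_eq_integral_Ioo]
    apply setIntegral_mono_set hint
    · filter_upwards [ae_restrict_mem measurableSet_Ioo] with x hx
      exact mul_nonneg (Real.rpow_nonneg (abs_nonneg _) _)
        (Real.rpow_nonneg (Real.sinh_pos_iff.mpr hx.1).le _)
    · exact HasSubset.Subset.eventuallyLE (Set.Ioo_subset_Ioo (le_of_lt ht0) le_rfl)
  have hLnonneg : (0:ℝ) ≤ Real.log (Real.tanh (R/2) / Real.tanh (t/2)) := by
    rw [← e4]
    apply setIntegral_nonneg measurableSet_Ioc
    intro x hx
    exact (inv_nonneg).mpr (hsinhpos x ⟨le_of_lt hx.1, hx.2⟩).le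
  calc |v t| ≤ ∫ s in Set.Ioc t R, |v' s| := habs
    _ ≤ (∫ s in Set.Ioc t R, |v' s| ^ p * Real.sinh s ^ (p - 1)) ^ (1/p) *
        (Real.log (Real.tanh (R/2) / Real.tanh (t/2))) ^ ((p-1)/p) := holder
    _ ≤ (∫ s in Set.Ioo (0:ℝ) R, |v' s| ^ p * Real.sinh s ^ (p - 1)) ^ (1/p) *
        (Real.log (Real.tanh (R/2) / Real.tanh (t/2))) ^ ((p-1)/p) := by
        apply mul_le_mul_of_nonneg_right
        · exact Real.rpow_le_rpow hintnonneg hmono (by positivity)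
        · exact Real.rpow_nonneg hLnonneg _
    _ = (Real.log (Real.tanh (R / 2) / Real.tanh (t / 2))) ^ ((p - 1) / p) *
        (∫ s in Set.Ioo (0:ℝ) R, |v' s| ^ p * Real.sinh s ^ (p - 1)) ^ (1 / p) := by
        ring
end

section
/- Let p > 1, k a positive integer, N = kp, R > 0, and θ > −1. For every μ ≥ 0 and every k-times continuously differentiable v : (0, R] → ℝ with Σ_{j=0}^{k} ∫₀^R |v^{(j)}(t)|^p sinh^{N−1}(t) dt < ∞, the integral ∫₀^R exp( μ·|v(t)|^{p/(p−1)} ) · sinh^{θ}(t) dt is finite. -/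
set_option maxHeartbeats 2000000
open MeasureTheory Set intervalIntegral

lemma ftc_sub {R : ℝ} {g : ℝ → ℝ} (hg : ContDiffOn ℝ 1 g (Set.Ioc 0 R))
    {t ε : ℝ} (ht : 0 < t) (hte : t ≤ ε) (hεR : ε < R) :
    g ε - g t = ∫ s in t..ε, derivWithin g (Set.Ioc 0 R) s := by
  have hmem : ∀ x ∈ Set.Icc t ε, Set.Ioc (0:ℝ) R ∈ nhds x := by
    intro x hx
    exact Ioc_mem_nhds (lt_of_lt_of_le ht hx.1) (lt_of_le_of_lt hx.2 hεR)
  have hsub : Set.Icc t ε ⊆ Set.Ioc 0 R := fun x hx =>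
    ⟨lt_of_lt_of_le ht hx.1, le_of_lt (lt_of_le_of_lt hx.2 hεR)⟩
  symm
  apply intervalIntegral.integral_eq_sub_of_hasDerivAt
  · intro x hx
    rw [Set.uIcc_of_le hte] at hx
    have hd : DifferentiableAt ℝ g x :=
      ((hg.differentiableOn one_ne_zero) x (hsub hx)).differentiableAt (hmem x hx)
    have : derivWithin g (Set.Ioc 0 R) x = deriv g x := derivWithin_of_mem_nhds (hmem x hx)
    rw [this]
    exact hd.hasDerivAt
  · apply ContinuousOn.intervalIntegrable
    rw [Set.uIcc_of_le hte]
    exact (hg.continuousOn_derivWithin (uniqueDiffOn_Ioc 0 R) le_rfl).mono hsub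

lemma aux_bound {R : ℝ} (hR : 0 < R) (m : ℕ) (hm : 1 ≤ m) (g : ℝ → ℝ)
    (hg : ContDiffOn ℝ m g (Set.Ioc 0 R)) {ε : ℝ} (hε : 0 < ε) (hεR : ε < R) :
    ∃ A : ℝ, 0 ≤ A ∧ ∀ t ∈ Set.Ioc 0 ε,
      |g t| ≤ A + ∫ s in t..ε, s ^ (m - 1) * |iteratedDerivWithin m g (Set.Ioc 0 R) s| := by
  induction m, hm using Nat.le_induction generalizing g with
  | base =>
    refine ⟨|g ε|, abs_nonneg _, fun t ht => ?_⟩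
    have hte := ht.2
    have ht0 := ht.1
    have hsub : Set.Icc t ε ⊆ Set.Ioc 0 R := fun x hx =>
      ⟨lt_of_lt_of_le ht0 hx.1, le_of_lt (lt_of_le_of_lt hx.2 hεR)⟩
    have hkey := ftc_sub (hg.of_le (by norm_num)) ht0 hte hεR
    have hconta : ContinuousOn (fun s => derivWithin g (Set.Ioc 0 R) s) (Set.Icc t ε) :=
      (hg.continuousOn_derivWithin (uniqueDiffOn_Ioc 0 R) (by norm_num)).mono hsub
    have h1 : |g t| ≤ |g ε| + |g ε - g t| := by
      have := abs_sub_abs_le_abs_sub (g t) (g ε)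
      have h2 := abs_sub_comm (g t) (g ε)
      linarith [abs_nonneg (g t - g ε)]
    calc |g t| ≤ |g ε| + |g ε - g t| := h1
      _ = |g ε| + |∫ s in t..ε, derivWithin g (Set.Ioc 0 R) s| := by rw [hkey]
      _ ≤ |g ε| + ∫ s in t..ε, |derivWithin g (Set.Ioc 0 R) s| := by
          gcongr
          exact intervalIntegral.abs_integral_le_integral_abs hte
      _ = |g ε| + ∫ s in t..ε, s ^ (1 - 1) * |iteratedDerivWithin 1 g (Set.Ioc 0 R) s| := by
          congr 1
          apply intervalIntegral.integral_congr
          intro x hx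
          rw [Set.uIcc_of_le hte] at hx
          simp only [pow_zero, one_mul, Nat.sub_self,
            iteratedDerivWithin_one]
  | succ m hm1 ih =>
    set S := Set.Ioc (0:ℝ) R with hS
    have hUD : UniqueDiffOn ℝ S := uniqueDiffOn_Ioc 0 R
    set g₁ := derivWithin g S with hg₁def
    have hg₁ : ContDiffOn ℝ m g₁ S := hg.derivWithin hUD (by exact_mod_cast le_rfl)
    obtain ⟨A₁, hA₁0, hA₁⟩ := ih g₁ hg₁
    -- the m-th iterated derivative of g₁ agrees with the (m+1)-st of g on S
    have hDcong : ∀ x ∈ S, iteratedDerivWithin m g₁ S x = iteratedDerivWithin (m+1) g S x := by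
      intro x hx
      rw [iteratedDerivWithin_succ']
    set D := fun s => iteratedDerivWithin (m+1) g S s with hDdef
    have hDcont : ContinuousOn D S := by
      exact hg.continuousOn_iteratedDerivWithin (by exact_mod_cast le_rfl) hUD
    refine ⟨|g ε| + A₁ * ε, by positivity, fun t ht => ?_⟩
    have ht0 := ht.1
    have hte := ht.2
    have hsub : Set.Icc t ε ⊆ S := fun x hx =>
      ⟨lt_of_lt_of_le ht0 hx.1, le_of_lt (lt_of_le_of_lt hx.2 hεR)⟩
    -- φ is the integrand appearing in the IH bound for g₁
    set φ : ℝ → ℝ := fun s => s ^ (m - 1) * |D s| with hφdef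
    have hφcont : ContinuousOn φ S := by
      apply ContinuousOn.mul (continuousOn_pow _)
      exact hDcont.abs
    have hφnonneg : ∀ s ∈ S, 0 ≤ φ s := by
      intro s hs
      have : (0:ℝ) ≤ s ^ (m-1) := pow_nonneg (le_of_lt hs.1) _
      positivity
    -- for the IH, rewrite the integrand
    have hIH : ∀ s ∈ Set.Ioc 0 ε, |g₁ s| ≤ A₁ + ∫ u in s..ε, φ u := by
      intro s hs
      refine (hA₁ s hs).trans (le_of_eq ?_)
      congr 1
      apply intervalIntegral.integral_congr
      intro x hx
      rw [Set.uIcc_of_le hs.2] at hx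
      have hxS : x ∈ S := ⟨lt_of_lt_of_le hs.1 hx.1, le_of_lt (lt_of_le_of_lt hx.2 hεR)⟩
      simp only [hφdef, hDdef, hDcong x hxS]
    -- G s = ∫_s^ε φ
    set G : ℝ → ℝ := fun s => ∫ u in s..ε, φ u with hGdef
    have hφint : ∀ a b : ℝ, Set.uIcc a b ⊆ S → IntervalIntegrable φ volume a b := by
      intro a b hab
      exact (hφcont.mono hab).intervalIntegrable
    have hGderiv : ∀ x ∈ Set.Icc t ε, HasDerivAt G (-(φ x)) x := by
      intro x hx
      have hxS : x ∈ S := hsub hx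
      have hxIoo : x ∈ Set.Ioo (0:ℝ) R := ⟨hxS.1, lt_of_le_of_lt hx.2 hεR⟩
      have hcontAt : ContinuousAt φ x :=
        (hφcont.mono Set.Ioo_subset_Ioc_self).continuousAt (isOpen_Ioo.mem_nhds hxIoo)
      have hmeas : StronglyMeasurableAtFilter φ (nhds x) :=
        ContinuousOn.stronglyMeasurableAtFilter isOpen_Ioo
          (hφcont.mono Set.Ioo_subset_Ioc_self) x hxIoo
      have hint : IntervalIntegrable φ volume ε x := by
        apply hφint
        rw [Set.uIcc_comm]
        exact (Set.uIcc_of_le hx.2) ▸ fun u hu => hsub ⟨le_trans hx.1 hu.1, hu.2⟩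
      have h1 : HasDerivAt (fun u => ∫ s in ε..u, φ s) (φ x) x :=
        intervalIntegral.integral_hasDerivAt_right hint hmeas hcontAt
      have h2 : G = fun u => -(∫ s in ε..u, φ s) := by
        funext u
        show (∫ s in u..ε, φ s) = -(∫ s in ε..u, φ s)
        exact intervalIntegral.integral_symm ε u
      rw [h2]
      exact h1.neg
    -- G is continuous hence interval integrable on [t, ε]
    have hGcont : ContinuousOn G (Set.Icc t ε) := fun x hx =>
      ((hGderiv x hx).continuousAt).continuousWithinAt
    have hGnonneg : ∀ s ∈ Set.Icc t ε, 0 ≤ G s := by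
      intro s hs
      apply intervalIntegral.integral_nonneg hs.2
      intro u hu
      exact hφnonneg u (hsub ⟨le_trans hs.1 hu.1, hu.2⟩)
    -- integration by parts:  ∫_t^ε G = -t·G t + ∫_t^ε s·φ s ≤ ∫_t^ε s·φ s
    have hsφint : IntervalIntegrable (fun s => φ s * s) volume t ε := by
      apply ContinuousOn.intervalIntegrable
      rw [Set.uIcc_of_le hte]
      exact ((hφcont.mono hsub).mul continuousOn_id)
    have hφint' : IntervalIntegrable (fun s => -(φ s)) volume t ε := by
      apply IntervalIntegrable.neg
      apply hφint
      rw [Set.uIcc_of_le hte]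
      exact hsub
    have hparts : ∫ s in t..ε, G s * 1 =
        G ε * ε - G t * t - ∫ s in t..ε, (-(φ s)) * s := by
      apply intervalIntegral.integral_mul_deriv_eq_deriv_mul
      · intro x hx
        rw [Set.uIcc_of_le hte] at hx
        exact hGderiv x hx
      · intro x _
        exact hasDerivAt_id' x
      · rw [intervalIntegrable_iff] at hφint' ⊢
        exact hφint'
      · exact intervalIntegrable_const
    have hGε : G ε = 0 := by
      show (∫ s in ε..ε, φ s) = 0
      simp
    have hIBP : (∫ s in t..ε, G s) ≤ ∫ s in t..ε, φ s * s := by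
      have h3 : (∫ s in t..ε, G s) = ∫ s in t..ε, G s * 1 := by simp
      have h4 : (∫ s in t..ε, (-(φ s)) * s) = -∫ s in t..ε, φ s * s := by
        rw [← intervalIntegral.integral_neg]
        congr 1; funext s; ring
      rw [h3, hparts, hGε, h4]
      have hGt : 0 ≤ G t * t := mul_nonneg (hGnonneg t ⟨le_refl t, hte⟩) (le_of_lt ht0)
      linarith
    -- pointwise: φ s * s ≤ s ^ m * |D s| on [t, ε]
    have hptw : ∀ s ∈ Set.Icc t ε, φ s * s ≤ s ^ m * |D s| := by
      intro s hs
      have hs0 : 0 ≤ s := le_trans (le_of_lt ht0) hs.1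
      have : s ^ (m - 1) * s = s ^ m := by
        rw [← pow_succ]
        congr 1
        omega
      show s ^ (m-1) * |D s| * s ≤ s ^ m * |D s|
      rw [mul_right_comm, this]
    -- FTC step for g itself
    have hkey := ftc_sub (hg.of_le (by exact_mod_cast Nat.le_add_left 1 m)) ht0 hte hεR
    have h1 : |g t| ≤ |g ε| + ∫ s in t..ε, |g₁ s| := by
      have ha : |g t| ≤ |g ε| + |g ε - g t| := by
        have := abs_sub_abs_le_abs_sub (g t) (g ε)
        have h2 := abs_sub_comm (g t) (g ε)
        linarith [abs_nonneg (g t - g ε)]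
      refine ha.trans ?_
      gcongr
      rw [hkey]
      exact intervalIntegral.abs_integral_le_integral_abs hte
    have hg₁cont : ContinuousOn g₁ S := hg₁.continuousOn
    have hintabs : IntervalIntegrable (fun s => |g₁ s|) volume t ε := by
      apply ContinuousOn.intervalIntegrable
      rw [Set.uIcc_of_le hte]
      exact (hg₁cont.mono hsub).abs
    have hintAG : IntervalIntegrable (fun s => A₁ + G s) volume t ε := by
      apply ContinuousOn.intervalIntegrable
      rw [Set.uIcc_of_le hte]
      exact continuousOn_const.add hGcont
    have h2 : (∫ s in t..ε, |g₁ s|) ≤ ∫ s in t..ε, (A₁ + G s) := by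
      apply intervalIntegral.integral_mono_on hte hintabs hintAG
      intro s hs
      exact hIH s ⟨lt_of_lt_of_le ht0 hs.1, hs.2⟩
    have h3 : (∫ s in t..ε, (A₁ + G s)) = A₁ * (ε - t) + ∫ s in t..ε, G s := by
      rw [intervalIntegral.integral_add intervalIntegrable_const
        (hGcont.intervalIntegrable_of_Icc hte)]
      simp [mul_comm]
    have h5 : (∫ s in t..ε, φ s * s) ≤ ∫ s in t..ε, s ^ m * |D s| := by
      apply intervalIntegral.integral_mono_on hte hsφint _ hptw
      apply ContinuousOn.intervalIntegrable
      rw [Set.uIcc_of_le hte]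
      exact (continuousOn_pow m).mul ((hDcont.mono hsub).abs)
    have hfinal : (∫ s in t..ε, s ^ m * |D s|) =
        ∫ s in t..ε, s ^ (m + 1 - 1) * |iteratedDerivWithin (m+1) g S s| := by
      norm_num
      rfl
    have hA₁t : A₁ * (ε - t) ≤ A₁ * ε := by nlinarith
    calc |g t| ≤ |g ε| + ∫ s in t..ε, |g₁ s| := h1
      _ ≤ |g ε| + (A₁ * (ε - t) + ∫ s in t..ε, G s) := by rw [← h3]; linarith
      _ ≤ |g ε| + (A₁ * ε + ∫ s in t..ε, s ^ m * |D s|) := by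
          have := hIBP.trans h5
          linarith
      _ = |g ε| + A₁ * ε + ∫ s in t..ε, s ^ (m + 1 - 1) * |iteratedDerivWithin (m+1) g S s| := by
          rw [← hfinal]; ring
lemma hoelder_bound {p q : ℝ} (hp : 1 < p) (hq : q = p/(p-1)) {R : ℝ} {f : ℝ → ℝ}
    (hf : ContinuousOn f (Set.Ioc 0 R)) {k N : ℕ} (hk : 1 ≤ k) (hN : (N : ℝ) = k * p)
    {t ε : ℝ} (ht : 0 < t) (hte : t ≤ ε) (hεR : ε < R) :
    (∫ s in t..ε, s ^ (k - 1) * |f s|) ≤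
      (∫ s in t..ε, |f s| ^ p * s ^ ((N : ℝ) - 1)) ^ (1/p) * (Real.log (ε/t)) ^ (1/q) := by
  have hp0 : (0:ℝ) < p := lt_trans zero_lt_one hp
  have hp1 : p - 1 ≠ 0 := by linarith
  have hpq : p.HolderConjugate q := (Real.holderConjugate_iff_eq_conjExponent hp).mpr hq
  have hq0 : 0 < q := hpq.symm.pos
  set α : ℝ := ((N : ℝ) - 1) / p with hα
  set β : ℝ := ((k : ℝ) - 1) - α with hβ
  set F₁ : ℝ → ℝ := fun s => |f s| * s ^ α with hF₁
  set F₂ : ℝ → ℝ := fun s => s ^ β with hF₂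
  have hsub : Set.Icc t ε ⊆ Set.Ioc 0 R := fun x hx =>
    ⟨lt_of_lt_of_le ht hx.1, le_of_lt (lt_of_le_of_lt hx.2 hεR)⟩
  have hμ : True := trivial
  haveI : IsFiniteMeasure (volume.restrict (Set.Ioc t ε)) := by
    constructor
    rw [Measure.restrict_apply_univ]
    exact measure_Ioc_lt_top
  -- continuity of the pieces
  have hcont1 : ContinuousOn F₁ (Set.Icc t ε) := by
    apply ContinuousOn.mul ((hf.mono hsub).abs)
    apply ContinuousOn.rpow_const continuousOn_id
    intro x hx
    exact Or.inl (ne_of_gt (lt_of_lt_of_le ht hx.1))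
  have hcont2 : ContinuousOn F₂ (Set.Icc t ε) := by
    apply ContinuousOn.rpow_const continuousOn_id
    intro x hx
    exact Or.inl (ne_of_gt (lt_of_lt_of_le ht hx.1))
  have hmeas1 : AEStronglyMeasurable F₁ (volume.restrict (Set.Ioc t ε)) :=
    (hcont1.mono Set.Ioc_subset_Icc_self).aestronglyMeasurable measurableSet_Ioc
  have hmeas2 : AEStronglyMeasurable F₂ (volume.restrict (Set.Ioc t ε)) :=
    (hcont2.mono Set.Ioc_subset_Icc_self).aestronglyMeasurable measurableSet_Ioc
  obtain ⟨C₁, hC₁⟩ := (isCompact_Icc (a := t) (b := ε)).exists_bound_of_continuousOn hcont1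
  obtain ⟨C₂, hC₂⟩ := (isCompact_Icc (a := t) (b := ε)).exists_bound_of_continuousOn hcont2
  have hmem1 : MemLp F₁ (ENNReal.ofReal p) (volume.restrict (Set.Ioc t ε)) := by
    apply MemLp.of_bound hmeas1 C₁
    filter_upwards [ae_restrict_mem measurableSet_Ioc] with x hx
    exact hC₁ x (Set.Ioc_subset_Icc_self hx)
  have hmem2 : MemLp F₂ (ENNReal.ofReal q) (volume.restrict (Set.Ioc t ε)) := by
    apply MemLp.of_bound hmeas2 C₂
    filter_upwards [ae_restrict_mem measurableSet_Ioc] with x hx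
    exact hC₂ x (Set.Ioc_subset_Icc_self hx)
  have hnn1 : 0 ≤ᵐ[volume.restrict (Set.Ioc t ε)] F₁ := by
    filter_upwards [ae_restrict_mem measurableSet_Ioc] with x hx
    have : 0 < x := lt_of_lt_of_le ht (le_of_lt hx.1)
    positivity
  have hnn2 : 0 ≤ᵐ[volume.restrict (Set.Ioc t ε)] F₂ := by
    filter_upwards [ae_restrict_mem measurableSet_Ioc] with x hx
    have : 0 < x := lt_of_lt_of_le ht (le_of_lt hx.1)
    positivity
  have key := MeasureTheory.integral_mul_le_Lp_mul_Lq_of_nonneg hpq hnn1 hnn2 hmem1 hmem2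
  -- identify the three integrals
  have hEq0 : (∫ s in t..ε, s ^ (k - 1) * |f s|) = ∫ a, F₁ a * F₂ a ∂(volume.restrict (Set.Ioc t ε)) := by
    rw [intervalIntegral.integral_of_le hte]
    apply setIntegral_congr_fun measurableSet_Ioc
    intro x hx
    show x ^ (k - 1) * |f x| = F₁ x * F₂ x
    have hx0 : 0 < x := lt_trans ht hx.1
    have h1 : F₁ x * F₂ x = |f x| * x ^ (α + β) := by
      rw [hF₁, hF₂, Real.rpow_add hx0]; ring
    have h2 : α + β = ((k:ℝ) - 1) := by rw [hβ]; ring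
    have h3 : x ^ ((k:ℝ) - 1) = x ^ (k - 1 : ℕ) := by
      rw [← Real.rpow_natCast x (k-1)]
      congr 1
      have : ((k - 1 : ℕ) : ℝ) = (k : ℝ) - 1 := by
        have := Nat.cast_sub hk (R := ℝ)
        simpa using this
      rw [this]
    rw [h1, h2, h3]; ring
  have hEq1 : (∫ a, F₁ a ^ p ∂(volume.restrict (Set.Ioc t ε))) = ∫ s in t..ε, |f s| ^ p * s ^ ((N : ℝ) - 1) := by
    rw [intervalIntegral.integral_of_le hte]
    apply setIntegral_congr_fun measurableSet_Ioc
    intro x hx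
    show F₁ x ^ p = |f x| ^ p * x ^ ((N:ℝ) - 1)
    have hx0 : 0 < x := lt_trans ht hx.1
    show (|f x| * x ^ α) ^ p = |f x| ^ p * x ^ ((N:ℝ) - 1)
    rw [Real.mul_rpow (abs_nonneg _) (Real.rpow_nonneg hx0.le _)]
    congr 1
    rw [← Real.rpow_mul hx0.le]
    congr 1
    rw [hα]
    field_simp
  have hβq : β * q = -1 := by
    rw [hβ, hα, hq]
    field_simp
    nlinarith [hN]
  have hEq2 : (∫ a, F₂ a ^ q ∂(volume.restrict (Set.Ioc t ε))) = Real.log (ε/t) := by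
    have h1 : (∫ a, F₂ a ^ q ∂(volume.restrict (Set.Ioc t ε))) = ∫ s in t..ε, s⁻¹ := by
      rw [intervalIntegral.integral_of_le hte]
      apply setIntegral_congr_fun measurableSet_Ioc
      intro x hx
      show F₂ x ^ q = x⁻¹
      have hx0 : 0 < x := lt_trans ht hx.1
      show (x ^ β) ^ q = x⁻¹
      rw [← Real.rpow_mul hx0.le, hβq, Real.rpow_neg_one]
    rw [h1]
    exact integral_inv_of_pos ht (lt_of_lt_of_le ht hte)
  rw [hEq0, ← hEq1, ← hEq2]
  exact key

lemma sinh_le_mul_exp {t : ℝ} (ht : 0 ≤ t) : Real.sinh t ≤ t * Real.exp t := by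
  rw [Real.sinh_eq]
  have h1 : (-(2*t)) + 1 ≤ Real.exp (-(2*t)) := Real.add_one_le_exp _
  have h2 : Real.exp (-t) = Real.exp t * Real.exp (-(2*t)) := by
    rw [← Real.exp_add]; ring_nf
  nlinarith [Real.exp_pos t]

lemma rpow_two_add_le {x y q : ℝ} (hx : 0 ≤ x) (hy : 0 ≤ y) (hq : 0 ≤ q) :
    (x + y) ^ q ≤ 2 ^ q * (x ^ q + y ^ q) := by
  have h2q : (0:ℝ) ≤ 2 ^ q := Real.rpow_nonneg (by norm_num) q
  rcases le_total x y with h | h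
  · calc (x+y)^q ≤ (2*y)^q := Real.rpow_le_rpow (by linarith) (by linarith) hq
      _ = 2^q * y^q := Real.mul_rpow (by norm_num) hy
      _ ≤ 2^q * (x^q + y^q) :=
        mul_le_mul_of_nonneg_left (le_add_of_nonneg_left (Real.rpow_nonneg hx q)) h2q
  · calc (x+y)^q ≤ (2*x)^q := Real.rpow_le_rpow (by linarith) (by linarith) hq
      _ = 2^q * x^q := Real.mul_rpow (by norm_num) hx
      _ ≤ 2^q * (x^q + y^q) :=
        mul_le_mul_of_nonneg_left (le_add_of_nonneg_right (Real.rpow_nonneg hy q)) h2q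

theorem stmt15 (k : ℕ) (p R θ μ : ℝ) (hk : 0 < k) (hp : 1 < p) (hR : 0 < R)
    (N : ℕ) (hN : (N : ℝ) = k * p) (hθ : -1 < θ) (hμ : 0 ≤ μ)
    (v : ℝ → ℝ) (hv : ContDiffOn ℝ k v (Set.Ioc 0 R))
    (hint : ∀ j : ℕ, j ≤ k →
      IntegrableOn
        (fun t => |iteratedDerivWithin j v (Set.Ioc 0 R) t| ^ p * Real.sinh t ^ (N - 1))
        (Set.Ioo 0 R)) :
    IntegrableOn (fun t => Real.exp (μ * |v t| ^ (p / (p - 1))) * Real.sinh t ^ θ)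
      (Set.Ioo 0 R) := by
  have hp0 : (0:ℝ) < p := by linarith
  set q : ℝ := p / (p - 1) with hqdef
  have hq1 : 1 < q := by
    rw [hqdef]
    rw [lt_div_iff₀ (by linarith)]
    linarith
  have hq0 : (0:ℝ) < q := by linarith
  have hk1 : (1:ℝ) ≤ k := by exact_mod_cast hk
  have hN1 : 1 ≤ N := by
    have hpos : (0:ℝ) < N := by rw [hN]; nlinarith
    have : 0 < N := by exact_mod_cast hpos
    omega
  set S := Set.Ioc (0:ℝ) R with hS
  have hUD : UniqueDiffOn ℝ S := uniqueDiffOn_Ioc 0 R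
  set f := iteratedDerivWithin k v S with hf
  have hfcont : ContinuousOn f S :=
    hv.continuousOn_iteratedDerivWithin (by exact_mod_cast le_rfl) hUD
  set F : ℝ → ℝ := fun t => |f t| ^ p * Real.sinh t ^ (N - 1) with hF
  have hFint : IntegrableOn F (Set.Ioo 0 R) := hint k le_rfl
  have hFnn : ∀ s ∈ Set.Ioo (0:ℝ) R, 0 ≤ F s := by
    intro s hs
    have h1 : (0:ℝ) ≤ |f s| ^ p := Real.rpow_nonneg (abs_nonneg _) p
    have hsinh : (0:ℝ) ≤ Real.sinh s := by
      have := Real.sinh_pos_iff (x := s)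
      have h := this.mpr hs.1
      linarith
    have h2 : (0:ℝ) ≤ Real.sinh s ^ (N-1) := pow_nonneg hsinh _
    exact mul_nonneg h1 h2
  -- constants for the smallness argument
  set c₀ : ℝ := (θ + 1) / 2 with hc₀def
  have hc₀ : 0 < c₀ := by rw [hc₀def]; linarith
  set δ : ℝ := (c₀ / (2 ^ q * (μ + 1))) ^ (p / q) with hδdef
  have hbase : 0 < c₀ / (2 ^ q * (μ + 1)) := by
    apply div_pos hc₀
    have : (0:ℝ) < 2 ^ q := Real.rpow_pos_of_pos (by norm_num) q
    nlinarith
  have hδ0 : 0 < δ := Real.rpow_pos_of_pos hbase _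
  -- choose a small ε₂ where the weighted norm of the top derivative is < δ
  obtain ⟨ε₂, hε₂0, hε₂R, hε₂⟩ : ∃ ε₂ : ℝ, 0 < ε₂ ∧ ε₂ ≤ R ∧ ∫ x in Set.Ioo 0 ε₂, F x < δ := by
    have hmeasn : ∀ n : ℕ, MeasurableSet (Set.Ioo (0:ℝ) (R/(n+1))) := fun n => measurableSet_Ioo
    have hanti : Antitone (fun n : ℕ => Set.Ioo (0:ℝ) (R/(n+1))) := by
      intro a b hab
      apply Set.Ioo_subset_Ioo le_rfl
      apply div_le_div_of_nonneg_left hR.le (by positivity)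
      have : (a:ℝ) ≤ b := by exact_mod_cast hab
      linarith
    have hsub0 : ∀ n : ℕ, Set.Ioo (0:ℝ) (R/(n+1)) ⊆ Set.Ioo 0 R := by
      intro n
      apply Set.Ioo_subset_Ioo le_rfl
      apply div_le_self hR.le
      have : (0:ℝ) ≤ n := Nat.cast_nonneg n
      linarith
    have h0 := tendsto_setIntegral_of_antitone hmeasn hanti
      ⟨0, hFint.mono_set (hsub0 0)⟩ (f := F) (μ := volume)
    have hiInter : (⋂ n : ℕ, Set.Ioo (0:ℝ) (R/(n+1))) = ∅ := by
      rw [Set.eq_empty_iff_forall_notMem]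
      intro x hx
      have hx0 : 0 < x := (Set.mem_iInter.mp hx 0).1
      obtain ⟨n, hn⟩ := exists_nat_gt (R / x)
      have hxn := (Set.mem_iInter.mp hx n).2
      have hn1 : R / (n+1) < x := by
        rw [div_lt_iff₀ (by positivity)]
        rw [div_lt_iff₀ hx0] at hn
        nlinarith
      linarith
    rw [hiInter] at h0
    simp only [setIntegral_empty] at h0
    obtain ⟨n₀, hn₀⟩ := (h0.eventually_lt_const hδ0).exists
    exact ⟨R/(n₀+1), by positivity, div_le_self hR.le (by have : (0:ℝ) ≤ n₀ := Nat.cast_nonneg _; linarith), hn₀⟩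
  set ε : ℝ := min (ε₂/2) (R/2) with hεdef
  have hε0 : 0 < ε := lt_min (by linarith) (by linarith)
  have hεR : ε < R := lt_of_le_of_lt (min_le_right _ _) (by linarith)
  have hεε₂ : ε < ε₂ := lt_of_le_of_lt (min_le_left _ _) (by linarith)
  obtain ⟨A, hA0, hA⟩ := aux_bound hR k hk v hv hε0 hεR
  set B : ℝ := δ ^ (1/p) with hBdef
  have hB0 : 0 ≤ B := (Real.rpow_pos_of_pos hδ0 _).le
  have h2q : (0:ℝ) < 2 ^ q := Real.rpow_pos_of_pos (by norm_num) q
  have hsmall : μ * 2^q * B^q ≤ c₀ := by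
    have hBq : B^q = δ^(q/p) := by
      rw [hBdef, ← Real.rpow_mul hδ0.le]
      congr 1; ring
    have hδq : δ^(q/p) = c₀/(2^q*(μ+1)) := by
      rw [hδdef, ← Real.rpow_mul hbase.le]
      rw [show (p/q)*(q/p) = 1 by field_simp]
      exact Real.rpow_one _
    rw [hBq, hδq]
    have heq : μ * 2^q * (c₀/(2^q*(μ+1))) = c₀ * (μ/(μ+1)) := by
      field_simp
    rw [heq]
    have hle1 : μ/(μ+1) ≤ 1 := by
      rw [div_le_one (by linarith)]; linarith
    nlinarith
  set Mθ : ℝ := max ((Real.exp ε)^θ) 1 with hMθ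
  have hMθ1 : (1:ℝ) ≤ Mθ := le_max_right _ _
  set K : ℝ := Real.exp (μ * 2^q * A^q) * ε^c₀ * Mθ with hK
  -- the pointwise bound near zero
  have hptw : ∀ t ∈ Set.Ioo (0:ℝ) ε, Real.exp (μ * |v t|^q) * Real.sinh t ^ θ ≤ K * t^(θ - c₀) := by
    intro t ht
    have ht0 : 0 < t := ht.1
    have htε : t < ε := ht.2
    have htIoc : t ∈ Set.Ioc 0 ε := ⟨ht0, htε.le⟩
    have hL0 : 0 ≤ Real.log (ε/t) := Real.log_nonneg (by rw [le_div_iff₀ ht0]; linarith)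
    have hsub1 : Set.Icc t ε ⊆ S := fun x hx =>
      ⟨lt_of_lt_of_le ht0 hx.1, le_of_lt (lt_of_le_of_lt hx.2 hεR)⟩
    -- the weighted integral of |f|^p over (t, ε] is at most δ
    have hcontI : ContinuousOn (fun s => |f s|^p * s^((N:ℝ)-1)) (Set.Icc t ε) := by
      apply ContinuousOn.mul
      · apply ContinuousOn.rpow_const ((hfcont.mono hsub1).abs)
        intro x hx
        exact Or.inr hp0.le
      · apply ContinuousOn.rpow_const continuousOn_id
        intro x hx
        exact Or.inl (ne_of_gt (lt_of_lt_of_le ht0 hx.1))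
    have hIle : (∫ s in t..ε, |f s|^p * s^((N:ℝ)-1)) ≤ δ := by
      rw [intervalIntegral.integral_of_le htε.le]
      have hs1 : Set.Ioc t ε ⊆ Set.Ioo 0 R := fun x hx =>
        ⟨lt_trans ht0 hx.1, lt_of_le_of_lt hx.2 hεR⟩
      have hs2 : Set.Ioc t ε ⊆ Set.Ioo 0 ε₂ := fun x hx =>
        ⟨lt_trans ht0 hx.1, lt_of_le_of_lt hx.2 hεε₂⟩
      have hs3 : Set.Ioo (0:ℝ) ε₂ ⊆ Set.Ioo 0 R := Set.Ioo_subset_Ioo le_rfl hε₂R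
      have step_a : (∫ x in Set.Ioc t ε, |f x|^p * x^((N:ℝ)-1)) ≤ ∫ x in Set.Ioc t ε, F x := by
        apply setIntegral_mono_on
        · exact (hcontI.integrableOn_Icc).mono_set Set.Ioc_subset_Icc_self
        · exact hFint.mono_set hs1
        · exact measurableSet_Ioc
        · intro x hx
          have hx0 : 0 < x := lt_trans ht0 hx.1
          have hcast : x^((N:ℝ)-1) = x^(N-1 : ℕ) := by
            rw [← Real.rpow_natCast x (N-1)]
            congr 1
            have : ((N - 1 : ℕ) : ℝ) = (N : ℝ) - 1 := by
              have := Nat.cast_sub hN1 (R := ℝ)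
              simpa using this
            rw [this]
          rw [hcast]
          apply mul_le_mul_of_nonneg_left _ (Real.rpow_nonneg (abs_nonneg _) p)
          exact pow_le_pow_left₀ hx0.le (Real.self_le_sinh_iff.mpr hx0.le) _
      have step_b : (∫ x in Set.Ioc t ε, F x) ≤ ∫ x in Set.Ioo 0 ε₂, F x := by
        apply setIntegral_mono_set (hFint.mono_set hs3)
        · filter_upwards [ae_restrict_mem measurableSet_Ioo] with x hx
          exact hFnn x (hs3 hx)
        · exact hs2.eventuallyLE
      linarith
    have hInn : 0 ≤ ∫ s in t..ε, |f s|^p * s^((N:ℝ)-1) := by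
      apply intervalIntegral.integral_nonneg htε.le
      intro u hu
      have hu0 : 0 < u := lt_of_lt_of_le ht0 hu.1
      have := Real.rpow_nonneg (abs_nonneg (f u)) p
      have := Real.rpow_nonneg hu0.le ((N:ℝ)-1)
      positivity
    have h3 : (∫ s in t..ε, |f s|^p * s^((N:ℝ)-1))^(1/p) ≤ B := by
      rw [hBdef]
      exact Real.rpow_le_rpow hInn hIle (by positivity)
    have hstep1 : |v t| ≤ A + B * (Real.log (ε/t))^(1/q) := by
      have h1 := hA t htIoc
      have h2 := hoelder_bound hp hqdef hfcont (by omega : 1 ≤ k) hN ht0 htε.le hεR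
      calc |v t| ≤ A + ∫ s in t..ε, s^(k-1) * |f s| := h1
        _ ≤ A + (∫ s in t..ε, |f s|^p * s^((N:ℝ)-1))^(1/p) * (Real.log (ε/t))^(1/q) := by
            linarith
        _ ≤ A + B * (Real.log (ε/t))^(1/q) := by
            have := mul_le_mul_of_nonneg_right h3 (Real.rpow_nonneg hL0 (1/q))
            linarith
    have hstep2 : μ * |v t|^q ≤ μ*2^q*A^q + c₀ * Real.log (ε/t) := by
      have hBL0 : 0 ≤ B * (Real.log (ε/t))^(1/q) :=
        mul_nonneg hB0 (Real.rpow_nonneg hL0 _)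
      have hv1 : |v t|^q ≤ (A + B * (Real.log (ε/t))^(1/q))^q :=
        Real.rpow_le_rpow (abs_nonneg _) hstep1 hq0.le
      have hv2 : (A + B * (Real.log (ε/t))^(1/q))^q ≤ 2^q * (A^q + (B * (Real.log (ε/t))^(1/q))^q) :=
        rpow_two_add_le hA0 hBL0 hq0.le
      have hv3 : (B * (Real.log (ε/t))^(1/q))^q = B^q * Real.log (ε/t) := by
        rw [Real.mul_rpow hB0 (Real.rpow_nonneg hL0 _), ← Real.rpow_mul hL0]
        rw [show (1/q)*q = 1 by field_simp]
        rw [Real.rpow_one]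
      have hv4 : |v t|^q ≤ 2^q * A^q + 2^q * (B^q * Real.log (ε/t)) := by
        rw [hv3] at hv2
        calc |v t|^q ≤ 2^q * (A^q + B^q * Real.log (ε/t)) := hv1.trans hv2
          _ = 2^q * A^q + 2^q * (B^q * Real.log (ε/t)) := by ring
      have hv5 : μ * (2^q * (B^q * Real.log (ε/t))) ≤ c₀ * Real.log (ε/t) := by
        have := mul_le_mul_of_nonneg_right hsmall hL0
        calc μ * (2^q * (B^q * Real.log (ε/t))) = (μ * 2^q * B^q) * Real.log (ε/t) := by ring
          _ ≤ c₀ * Real.log (ε/t) := this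
      have hv6 := mul_le_mul_of_nonneg_left hv4 hμ
      calc μ * |v t|^q ≤ μ * (2^q * A^q + 2^q * (B^q * Real.log (ε/t))) := hv6
        _ = μ*2^q*A^q + μ * (2^q * (B^q * Real.log (ε/t))) := by ring
        _ ≤ μ*2^q*A^q + c₀ * Real.log (ε/t) := by linarith
    have hεt : (0:ℝ) < ε/t := by positivity
    have hstep3 : Real.exp (μ * |v t|^q) ≤ Real.exp (μ*2^q*A^q) * (ε/t)^c₀ := by
      have h5 := Real.exp_le_exp.mpr hstep2
      rw [Real.exp_add] at h5
      have h6 : Real.exp (c₀ * Real.log (ε/t)) = (ε/t)^c₀ := by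
        rw [Real.rpow_def_of_pos hεt, mul_comm]
      rw [h6] at h5
      exact h5
    have hsinhpos : 0 < Real.sinh t := Real.sinh_pos_iff.mpr ht0
    have hstep4 : Real.sinh t ^ θ ≤ Mθ * t^θ := by
      have htθ : 0 ≤ t^θ := Real.rpow_nonneg ht0.le θ
      rcases le_or_gt 0 θ with hθ0 | hθ0
      · have h1 : Real.sinh t ≤ t * Real.exp ε :=
          (sinh_le_mul_exp ht0.le).trans
            (mul_le_mul_of_nonneg_left (Real.exp_le_exp.mpr htε.le) ht0.le)
        calc Real.sinh t ^ θ ≤ (t * Real.exp ε)^θ := Real.rpow_le_rpow hsinhpos.le h1 hθ0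
          _ = t^θ * (Real.exp ε)^θ := Real.mul_rpow ht0.le (Real.exp_pos ε).le
          _ ≤ Mθ * t^θ := by
              have h7 : (Real.exp ε)^θ ≤ Mθ := le_max_left _ _
              nlinarith
      · have h1 : Real.sinh t ^ θ ≤ t^θ :=
          Real.rpow_le_rpow_of_nonpos ht0 (Real.self_le_sinh_iff.mpr ht0.le) hθ0.le
        calc Real.sinh t^θ ≤ t^θ := h1
          _ ≤ Mθ * t^θ := by nlinarith
    have hsθ : 0 ≤ Real.sinh t ^ θ := Real.rpow_nonneg hsinhpos.le θ
    calc Real.exp (μ * |v t|^q) * Real.sinh t ^ θ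
        ≤ (Real.exp (μ*2^q*A^q) * (ε/t)^c₀) * (Mθ * t^θ) := by
          apply mul_le_mul hstep3 hstep4 hsθ
          positivity
      _ = K * t^(θ - c₀) := by
          rw [hK, Real.div_rpow hε0.le ht0.le, Real.rpow_sub ht0]
          field_simp
  -- integrability near 0 by comparison
  have hIoo : IntegrableOn (fun t => Real.exp (μ * |v t| ^ q) * Real.sinh t ^ θ) (Set.Ioo 0 ε) := by
    have h1 : IntervalIntegrable (fun x : ℝ => x^(θ-c₀)) volume 0 ε :=
      intervalIntegrable_rpow' (by rw [hc₀def]; linarith)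
    have h2 : IntegrableOn (fun x : ℝ => x^(θ-c₀)) (Set.Ioc 0 ε) :=
      (intervalIntegrable_iff_integrableOn_Ioc_of_le hε0.le).mp h1
    have hdom : IntegrableOn (fun t => K * t^(θ-c₀)) (Set.Ioo 0 ε) :=
      (h2.mono_set Set.Ioo_subset_Ioc_self).const_mul K
    apply Integrable.mono' hdom
    · apply ContinuousOn.aestronglyMeasurable _ measurableSet_Ioo
      have hsubset : Set.Ioo (0:ℝ) ε ⊆ S := fun x hx =>
        ⟨hx.1, le_of_lt (lt_trans hx.2 hεR)⟩
      apply ContinuousOn.mul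
      · apply Real.continuous_exp.comp_continuousOn
        apply ContinuousOn.mul continuousOn_const
        apply ContinuousOn.rpow_const ((hv.continuousOn.mono hsubset).abs)
        intro x hx
        exact Or.inr hq0.le
      · apply ContinuousOn.rpow_const (Real.continuous_sinh.continuousOn)
        intro x hx
        exact Or.inl (ne_of_gt (Real.sinh_pos_iff.mpr hx.1))
    · filter_upwards [ae_restrict_mem measurableSet_Ioo] with x hx
      rw [Real.norm_eq_abs, abs_of_nonneg]
      · exact hptw x hx
      · have : 0 < Real.sinh x := Real.sinh_pos_iff.mpr hx.1
        have := Real.rpow_nonneg this.le θ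
        positivity
  -- integrability away from 0 by continuity
  have hIco : IntegrableOn (fun t => Real.exp (μ * |v t| ^ q) * Real.sinh t ^ θ) (Set.Ico ε R) := by
    apply IntegrableOn.mono_set _ Set.Ico_subset_Icc_self
    apply ContinuousOn.integrableOn_Icc
    have hsubset : Set.Icc ε R ⊆ S := fun x hx => ⟨lt_of_lt_of_le hε0 hx.1, hx.2⟩
    apply ContinuousOn.mul
    · apply Real.continuous_exp.comp_continuousOn
      apply ContinuousOn.mul continuousOn_const
      apply ContinuousOn.rpow_const ((hv.continuousOn.mono hsubset).abs)
      intro x hx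
      exact Or.inr hq0.le
    · apply ContinuousOn.rpow_const (Real.continuous_sinh.continuousOn)
      intro x hx
      exact Or.inl (ne_of_gt (Real.sinh_pos_iff.mpr (lt_of_lt_of_le hε0 hx.1)))
  apply (hIoo.union hIco).mono_set
  intro x hx
  rcases lt_or_ge x ε with h | h
  · exact Or.inl ⟨hx.1, h⟩
  · exact Or.inr ⟨h, hx.2⟩
end
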